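/- arXiv:2212.11241 — 7 statements merged into one kernel-verified Lean document; each statement's English description precedes it below -/
import Mathlib

section
/- Let ε > 0, let a : (0,ε] → (0,∞) be measurable, and let f : (0,ε] → ℝ be continuously differentiable with derivative f′. Then (f(ε) − (1/ε)∫₀^ε f(s) ds)² ≤ ((1/ε)∫₀^ε ∫ₛ^ε a(σ)⁻¹ dσ ds) · (∫₀^ε a(y) f′(y)² dy), provided the integrals on the right-hand side are finite. -/
/-! On each fiber, `f ε - f s = ∫ₛ^ε a^(-1/2) · (a^(1/2) f')`, so Cauchy–Schwarz gives
`(f ε - f s)² ≤ (∫ₛ^ε a⁻¹) · ∫₀^ε a f'²`. Since `f ε - (1/ε)∫₀^ε f` is the average over `s` of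
`f ε - f s`, Jensen's inequality for `x ↦ x²` turns these fiberwise bounds into the estimate. -/

open MeasureTheory Set

section Integral

variable {α : Type*} [MeasurableSpace α] {μ : Measure α}

theorem MeasureTheory.MemLp.inner_toLp_eq_integral_mul {u v : α → ℝ} (hu : MemLp u 2 μ)
    (hv : MemLp v 2 μ) : inner ℝ (hu.toLp u) (hv.toLp v) = ∫ x, u x * v x ∂μ := by
  rw [L2.inner_def]
  refine integral_congr_ae ?_
  filter_upwards [hu.coeFn_toLp, hv.coeFn_toLp] with x hux hvx
  simp [hux, hvx, mul_comm]

theorem sq_integral_mul_le_integral_sq_mul_integral_sq {u v : α → ℝ} (hu : MemLp u 2 μ)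
    (hv : MemLp v 2 μ) :
    (∫ x, u x * v x ∂μ) ^ 2 ≤ (∫ x, u x ^ 2 ∂μ) * ∫ x, v x ^ 2 ∂μ := by
  have hCS := real_inner_mul_inner_self_le (hu.toLp u) (hv.toLp v)
  simp only [hu.inner_toLp_eq_integral_mul, hv.inner_toLp_eq_integral_mul] at hCS
  simpa only [sq] using hCS

theorem sq_integral_le_integral_inv_mul_integral_mul_sq {w φ : α → ℝ} (hw : ∀ᵐ x ∂μ, 0 < w x)
    (hφ : AEStronglyMeasurable φ μ) (hw_inv : Integrable (fun x => (w x)⁻¹) μ)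
    (hwφ : Integrable (fun x => w x * φ x ^ 2) μ) :
    (∫ x, φ x ∂μ) ^ 2 ≤ (∫ x, (w x)⁻¹ ∂μ) * ∫ x, w x * φ x ^ 2 ∂μ := by
  -- `w = (w⁻¹)⁻¹` holds everywhere, also where `w` vanishes, since `0⁻¹ = 0`.
  have hw_meas : AEStronglyMeasurable w μ := by
    simpa only [Pi.inv_def, inv_inv] using hw_inv.aemeasurable.inv.aestronglyMeasurable
  have hu_sq : (fun x => √(w x)⁻¹ ^ 2) =ᵐ[μ] fun x => (w x)⁻¹ := by
    filter_upwards [hw] with x hx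
    exact Real.sq_sqrt (inv_nonneg.2 hx.le)
  have hv_sq : (fun x => (√(w x) * φ x) ^ 2) =ᵐ[μ] fun x => w x * φ x ^ 2 := by
    filter_upwards [hw] with x hx
    rw [mul_pow, Real.sq_sqrt hx.le]
  have huv : (fun x => √(w x)⁻¹ * (√(w x) * φ x)) =ᵐ[μ] φ := by
    filter_upwards [hw] with x hx
    rw [Real.sqrt_inv, ← mul_assoc, inv_mul_cancel₀ (Real.sqrt_pos.2 hx).ne', one_mul]
  have hu : MemLp (fun x => √(w x)⁻¹) 2 μ :=
    (memLp_two_iff_integrable_sq (by fun_prop)).2 (hw_inv.congr hu_sq.symm)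
  have hv : MemLp (fun x => √(w x) * φ x) 2 μ :=
    (memLp_two_iff_integrable_sq (by fun_prop)).2 (hwφ.congr hv_sq.symm)
  have hCS := sq_integral_mul_le_integral_sq_mul_integral_sq hu hv
  rwa [integral_congr_ae huv, integral_congr_ae hu_sq, integral_congr_ae hv_sq] at hCS

theorem sq_sub_average_le_average_of_sq_sub_le [IsFiniteMeasure μ] [NeZero μ] {f k : α → ℝ}
    {c : ℝ} (hf : AEStronglyMeasurable f μ) (hk : Integrable k μ)
    (hfk : ∀ᵐ x ∂μ, (c - f x) ^ 2 ≤ k x) :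
    (c - ⨍ x, f x ∂μ) ^ 2 ≤ ⨍ x, k x ∂μ := by
  have hcf : AEStronglyMeasurable (fun x => c - f x) μ := by fun_prop
  have hcf_sq : Integrable (fun x => (c - f x) ^ 2) μ := by
    refine hk.mono' (hcf.pow 2) ?_
    filter_upwards [hfk] with x hx
    rwa [Real.norm_of_nonneg (sq_nonneg _)]
  have hcf_int : Integrable (fun x => c - f x) μ :=
    ((memLp_two_iff_integrable_sq hcf).2 hcf_sq).integrable one_le_two
  have hf_int : Integrable f μ :=
    ((integrable_const c).sub hcf_int).congr (ae_of_all _ fun x => sub_sub_cancel c (f x))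
  have hμ : μ.real univ ≠ 0 := measureReal_univ_ne_zero
  have hshift : c - ⨍ x, f x ∂μ = ⨍ x, (c - f x) ∂μ := by
    simp only [average_eq, integral_sub (integrable_const c) hf_int, integral_const, smul_eq_mul]
    field_simp
  calc (c - ⨍ x, f x ∂μ) ^ 2 = (⨍ x, (c - f x) ∂μ) ^ 2 := by rw [hshift]
    _ ≤ ⨍ x, (c - f x) ^ 2 ∂μ :=
      even_two.convexOn_pow.map_average_le (continuousOn_pow 2) isClosed_univ
        (ae_of_all _ fun _ => mem_univ _) hcf_int hcf_sq
    _ ≤ ⨍ x, k x ∂μ := by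
      simp only [average_eq, smul_eq_mul]
      exact mul_le_mul_of_nonneg_left (integral_mono_ae hcf_sq hk hfk) (by positivity)

end Integral

theorem sq_sub_le_integral_inv_mul_integral_mul_sq_deriv {a f f' : ℝ → ℝ} {s t : ℝ} (hst : s ≤ t)
    (ha : ∀ x ∈ Ioc s t, 0 < a x) (hf : ∀ x ∈ Icc s t, HasDerivAt f (f' x) x)
    (hf' : IntervalIntegrable f' volume s t)
    (ha_inv : IntegrableOn (fun x => (a x)⁻¹) (Ioc s t))
    (henergy : IntegrableOn (fun x => a x * f' x ^ 2) (Ioc s t)) :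
    (f t - f s) ^ 2 ≤ (∫ x in Ioc s t, (a x)⁻¹) * ∫ x in Ioc s t, a x * f' x ^ 2 := by
  rw [← intervalIntegral.integral_eq_sub_of_hasDerivAt (by rwa [uIcc_of_le hst]) hf',
    intervalIntegral.integral_of_le hst]
  exact sq_integral_le_integral_inv_mul_integral_mul_sq
    ((ae_restrict_iff' measurableSet_Ioc).2 (ae_of_all _ ha)) hf'.1.aestronglyMeasurable ha_inv
    henergy

theorem trace_average_sq_estimate_general
    (ε : ℝ) (hε : 0 < ε) (a f f' : ℝ → ℝ)
    (ha_pos : ∀ x ∈ Set.Ioc (0 : ℝ) ε, 0 < a x)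
    (hf : ∀ x ∈ Set.Ioc (0 : ℝ) ε, HasDerivAt f (f' x) x)
    (hf'c : ContinuousOn f' (Set.Ioc 0 ε))
    (hinner : ∀ s ∈ Set.Ioc (0 : ℝ) ε, IntegrableOn (fun σ => (a σ)⁻¹) (Set.Ioc s ε))
    (houter : IntegrableOn (fun s => ∫ σ in Set.Ioc s ε, (a σ)⁻¹) (Set.Ioc 0 ε))
    (henergy : IntegrableOn (fun y => a y * (f' y) ^ 2) (Set.Ioc 0 ε)) :
    (f ε - (1/ε) * ∫ s in Set.Ioc (0 : ℝ) ε, f s) ^ 2 ≤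
      ((1/ε) * ∫ s in Set.Ioc (0 : ℝ) ε, ∫ σ in Set.Ioc s ε, (a σ)⁻¹) *
        (∫ y in Set.Ioc (0 : ℝ) ε, a y * (f' y) ^ 2) := by
  set E := ∫ y in Ioc (0 : ℝ) ε, a y * (f' y) ^ 2
  have hfiber : ∀ s ∈ Ioc (0 : ℝ) ε, (f ε - f s) ^ 2 ≤ (∫ σ in Ioc s ε, (a σ)⁻¹) * E := by
    intro s hs
    have hIcc : Icc s ε ⊆ Ioc 0 ε := fun x hx => ⟨hs.1.trans_le hx.1, hx.2⟩
    have hIoc : Ioc s ε ⊆ Ioc 0 ε := Ioc_subset_Ioc_left hs.1.le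
    have hinv_nonneg : 0 ≤ ∫ σ in Ioc s ε, (a σ)⁻¹ :=
      setIntegral_nonneg measurableSet_Ioc fun σ hσ => inv_nonneg.2 (ha_pos σ (hIoc hσ)).le
    have henergy_mono : ∫ y in Ioc s ε, a y * f' y ^ 2 ≤ E :=
      setIntegral_mono_set henergy ((ae_restrict_iff' measurableSet_Ioc).2 (ae_of_all _
        fun y hy => mul_nonneg (ha_pos y hy).le (sq_nonneg _))) hIoc.eventuallyLE
    calc (f ε - f s) ^ 2 ≤ (∫ σ in Ioc s ε, (a σ)⁻¹) * ∫ y in Ioc s ε, a y * f' y ^ 2 :=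
          sq_sub_le_integral_inv_mul_integral_mul_sq_deriv hs.2 (fun x hx => ha_pos x (hIoc hx))
            (fun x hx => hf x (hIcc hx)) ((hf'c.mono hIcc).intervalIntegrable_of_Icc hs.2)
            (hinner s hs) (henergy.mono_set hIoc)
      _ ≤ (∫ σ in Ioc s ε, (a σ)⁻¹) * E := mul_le_mul_of_nonneg_left henergy_mono hinv_nonneg
  have : NeZero (volume.restrict (Ioc (0 : ℝ) ε)) := ⟨by simp [hε]⟩
  have hf_meas : AEStronglyMeasurable f (volume.restrict (Ioc 0 ε)) :=
    ContinuousOn.aestronglyMeasurable (fun x hx => (hf x hx).continuousAt.continuousWithinAt)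
      measurableSet_Ioc
  have key := sq_sub_average_le_average_of_sq_sub_le hf_meas (houter.mul_const E)
    ((ae_restrict_iff' measurableSet_Ioc).2 (ae_of_all _ hfiber))
  simpa only [setAverage_eq, Real.volume_real_Ioc_of_le hε.le, sub_zero, smul_eq_mul,
    integral_mul_const, one_div, mul_assoc] using key

/-- One-dimensional quantitative estimate comparing the endpoint value `f(ε)` with the
boundary-layer average `(1/ε)∫₀^ε f`: the square of the difference is bounded by the
product of the non-degeneracy quantity `(1/ε)∫₀^ε ∫ₛ^ε a(σ)⁻¹ dσ ds` and the weighted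
energy `∫₀^ε a |f′|²`. -/
theorem trace_average_sq_estimate
    (ε : ℝ) (hε : 0 < ε) (a f f' : ℝ → ℝ)
    (ha_meas : Measurable a) (ha_pos : ∀ x ∈ Set.Ioc (0 : ℝ) ε, 0 < a x)
    (hf : ∀ x ∈ Set.Ioc (0 : ℝ) ε, HasDerivAt f (f' x) x)
    (hf'c : ContinuousOn f' (Set.Ioc 0 ε))
    (hinner : ∀ s ∈ Set.Ioc (0 : ℝ) ε, IntegrableOn (fun σ => (a σ)⁻¹) (Set.Ioc s ε))
    (houter : IntegrableOn (fun s => ∫ σ in Set.Ioc s ε, (a σ)⁻¹) (Set.Ioc 0 ε))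
    (henergy : IntegrableOn (fun y => a y * (f' y) ^ 2) (Set.Ioc 0 ε)) :
    (f ε - (1/ε) * ∫ s in Set.Ioc (0 : ℝ) ε, f s) ^ 2 ≤
      ((1/ε) * ∫ s in Set.Ioc (0 : ℝ) ε, ∫ σ in Set.Ioc s ε, (a σ)⁻¹) *
        (∫ y in Set.Ioc (0 : ℝ) ε, a y * (f' y) ^ 2) :=
  trace_average_sq_estimate_general ε hε a f f' ha_pos hf hf'c hinner houter henergy
end

section
/- Let ε > 0, let a : (0,ε] → (0,∞) be measurable, and let f : (0,ε] → ℝ be continuously differentiable with derivative f′. Then |f(ε) − (1/ε)∫₀^ε f(s) ds| ≤ (1/ε)∫₀^ε (∫ₛ^ε a(σ)⁻¹ dσ)^{1/2} (∫ₛ^ε a(σ) f′(σ)² dσ)^{1/2} ds, provided the integrals on the right-hand side are finite. -/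
open MeasureTheory

/-!
Write `f ε - f s = ∫ₛ^ε f'` and split `|f'| = a^{-1/2} · a^{1/2} |f'|`; Cauchy–Schwarz on `(s, ε]`
bounds `|f ε - f s|` by the integrand on the right. Averaging this pointwise bound over
`s ∈ (0, ε]` gives the estimate, since `f ε - (1/ε)∫₀^ε f = (1/ε)∫₀^ε (f ε - f s) ds`.
-/

open Set

section

variable {α : Type*} [MeasurableSpace α] {μ : Measure α}

theorem integral_abs_le_sqrt_integral_inv_mul_sqrt_integral_mul_sq {w g : α → ℝ}
    (hw : ∀ᵐ x ∂μ, 0 < w x) (hg : AEStronglyMeasurable g μ)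
    (hinv : Integrable (fun x => (w x)⁻¹) μ) (hwg : Integrable (fun x => w x * g x ^ 2) μ) :
    ∫ x, |g x| ∂μ ≤ √(∫ x, (w x)⁻¹ ∂μ) * √(∫ x, w x * g x ^ 2 ∂μ) := by
  have hw_meas : AEMeasurable w μ := by
    simpa only [inv_inv] using (hinv.aemeasurable (f := w⁻¹)).inv
  have hF : MemLp (fun x => √(w x)⁻¹) (ENNReal.ofReal 2) μ := by
    rw [ENNReal.ofReal_ofNat]
    refine (memLp_two_iff_integrable_sq hinv.aemeasurable.sqrt.aestronglyMeasurable).2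
      (hinv.congr ?_)
    filter_upwards [hw] with x hx
    rw [Real.sq_sqrt (inv_nonneg.2 hx.le)]
  have hG : MemLp (fun x => √(w x) * |g x|) (ENNReal.ofReal 2) μ := by
    rw [ENNReal.ofReal_ofNat]
    refine (memLp_two_iff_integrable_sq
      (hw_meas.sqrt.mul hg.aemeasurable.abs).aestronglyMeasurable).2 (hwg.congr ?_)
    filter_upwards [hw] with x hx
    rw [Pi.mul_apply, mul_pow, Real.sq_sqrt hx.le, sq_abs]
  have hsplit : (fun x => |g x|) =ᵐ[μ] fun x => √(w x)⁻¹ * (√(w x) * |g x|) := by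
    filter_upwards [hw] with x hx
    rw [← mul_assoc, ← Real.sqrt_mul (inv_nonneg.2 hx.le), inv_mul_cancel₀ hx.ne',
      Real.sqrt_one, one_mul]
  have hsq_F : (fun x => √(w x)⁻¹ ^ (2 : ℝ)) =ᵐ[μ] fun x => (w x)⁻¹ := by
    filter_upwards [hw] with x hx
    rw [Real.rpow_two, Real.sq_sqrt (inv_nonneg.2 hx.le)]
  have hsq_G : (fun x => (√(w x) * |g x|) ^ (2 : ℝ)) =ᵐ[μ] fun x => w x * g x ^ 2 := by
    filter_upwards [hw] with x hx
    rw [Real.rpow_two, mul_pow, Real.sq_sqrt hx.le, sq_abs]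
  calc ∫ x, |g x| ∂μ = ∫ x, √(w x)⁻¹ * (√(w x) * |g x|) ∂μ := integral_congr_ae hsplit
    _ ≤ (∫ x, √(w x)⁻¹ ^ (2 : ℝ) ∂μ) ^ (1 / (2 : ℝ)) *
          (∫ x, (√(w x) * |g x|) ^ (2 : ℝ) ∂μ) ^ (1 / (2 : ℝ)) :=
      integral_mul_le_Lp_mul_Lq_of_nonneg Real.HolderConjugate.two_two
        (.of_forall fun _ => Real.sqrt_nonneg _)
        (.of_forall fun _ => mul_nonneg (Real.sqrt_nonneg _) (abs_nonneg _)) hF hG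
    _ = √(∫ x, (w x)⁻¹ ∂μ) * √(∫ x, w x * g x ^ 2 ∂μ) := by
      rw [integral_congr_ae hsq_F, integral_congr_ae hsq_G, Real.sqrt_eq_rpow, Real.sqrt_eq_rpow]

theorem abs_sub_integral_le_integral_of_abs_sub_le [IsFiniteMeasure μ] {c : ℝ} {f g : α → ℝ}
    (hf : AEStronglyMeasurable f μ) (hg : Integrable g μ) (h : ∀ᵐ x ∂μ, |c - f x| ≤ g x) :
    |μ.real univ * c - ∫ x, f x ∂μ| ≤ ∫ x, g x ∂μ := by
  have hf_int : Integrable f μ := by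
    refine ((integrable_const |c|).add hg).mono' hf ?_
    filter_upwards [h] with x hx
    have := abs_sub_abs_le_abs_sub (f x) c
    rw [abs_sub_comm (f x)] at this
    rw [Real.norm_eq_abs, Pi.add_apply]
    linarith
  calc |μ.real univ * c - ∫ x, f x ∂μ| = |∫ x, (c - f x) ∂μ| := by
        rw [integral_sub (integrable_const c) hf_int, integral_const, smul_eq_mul]
    _ ≤ ∫ x, |c - f x| ∂μ := abs_integral_le_integral_abs
    _ ≤ ∫ x, g x ∂μ := integral_mono_ae ((integrable_const c).sub hf_int).abs hg h

end

theorem abs_sub_le_sqrt_integral_inv_mul_sqrt_integral_mul_deriv_sq {a f f' : ℝ → ℝ} {s b : ℝ}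
    (hsb : s ≤ b) (ha : ∀ x ∈ Ioc s b, 0 < a x) (hf : ∀ x ∈ Icc s b, HasDerivAt f (f' x) x)
    (hf' : ContinuousOn f' (Icc s b)) (hinv : IntegrableOn (fun x => (a x)⁻¹) (Ioc s b))
    (henergy : IntegrableOn (fun x => a x * f' x ^ 2) (Ioc s b)) :
    |f b - f s| ≤ √(∫ x in Ioc s b, (a x)⁻¹) * √(∫ x in Ioc s b, a x * f' x ^ 2) := by
  have hftc : f b - f s = ∫ x in Ioc s b, f' x := by
    rw [← intervalIntegral.integral_of_le hsb, intervalIntegral.integral_eq_sub_of_hasDerivAt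
      (by rwa [uIcc_of_le hsb]) (hf'.intervalIntegrable_of_Icc hsb)]
  rw [hftc]
  exact abs_integral_le_integral_abs.trans
    (integral_abs_le_sqrt_integral_inv_mul_sqrt_integral_mul_sq
      (ae_restrict_of_forall_mem measurableSet_Ioc ha)
      ((hf'.mono Ioc_subset_Icc_self).aestronglyMeasurable measurableSet_Ioc) hinv henergy)

theorem trace_average_abs_estimate_general
    (ε : ℝ) (hε : 0 < ε) (a f f' : ℝ → ℝ)
    (ha_pos : ∀ x ∈ Set.Ioc (0 : ℝ) ε, 0 < a x)
    (hf : ∀ x ∈ Set.Ioc (0 : ℝ) ε, HasDerivAt f (f' x) x)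
    (hf'c : ContinuousOn f' (Set.Ioc 0 ε))
    (hinner : ∀ s ∈ Set.Ioc (0 : ℝ) ε, IntegrableOn (fun σ => (a σ)⁻¹) (Set.Ioc s ε))
    (henergy : IntegrableOn (fun σ => a σ * (f' σ) ^ 2) (Set.Ioc 0 ε))
    (houter : IntegrableOn
      (fun s => Real.sqrt (∫ σ in Set.Ioc s ε, (a σ)⁻¹) *
        Real.sqrt (∫ σ in Set.Ioc s ε, a σ * (f' σ) ^ 2)) (Set.Ioc 0 ε)) :
    |f ε - (1/ε) * ∫ s in Set.Ioc (0 : ℝ) ε, f s| ≤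
      (1/ε) * ∫ s in Set.Ioc (0 : ℝ) ε,
        Real.sqrt (∫ σ in Set.Ioc s ε, (a σ)⁻¹) *
          Real.sqrt (∫ σ in Set.Ioc s ε, a σ * (f' σ) ^ 2) := by
  have hpointwise : ∀ s ∈ Ioc 0 ε, |f ε - f s| ≤
      √(∫ σ in Ioc s ε, (a σ)⁻¹) * √(∫ σ in Ioc s ε, a σ * f' σ ^ 2) := by
    intro s hs
    have hIcc : Icc s ε ⊆ Ioc 0 ε := Icc_subset_Ioc_iff hs.2 |>.2 ⟨hs.1, le_rfl⟩
    exact abs_sub_le_sqrt_integral_inv_mul_sqrt_integral_mul_deriv_sq hs.2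
      (fun x hx => ha_pos x (hIcc (Ioc_subset_Icc_self hx))) (fun x hx => hf x (hIcc hx))
      (hf'c.mono hIcc) (hinner s hs) (henergy.mono_set (hIcc.trans' Ioc_subset_Icc_self))
  have hf_cont : ContinuousOn f (Ioc 0 ε) := fun x hx =>
    (hf x hx).continuousAt.continuousWithinAt
  have hf_meas := hf_cont.aestronglyMeasurable (μ := volume) measurableSet_Ioc
  have hmean := abs_sub_integral_le_integral_of_abs_sub_le hf_meas houter
    (ae_restrict_of_forall_mem measurableSet_Ioc hpointwise)
  rw [measureReal_restrict_apply_univ, Real.volume_real_Ioc_of_le hε.le, sub_zero] at hmean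
  have hrw : f ε - (1/ε) * ∫ s in Ioc 0 ε, f s = (1/ε) * (ε * f ε - ∫ s in Ioc 0 ε, f s) := by
    field_simp
  rw [hrw, abs_mul, abs_of_pos (one_div_pos.2 hε)]
  exact mul_le_mul_of_nonneg_left hmean (one_div_pos.2 hε).le

/-- One-dimensional quantitative estimate comparing the endpoint value `f(ε)` with the
boundary-layer average `(1/ε)∫₀^ε f` in the `L¹` form: the difference is bounded by
`(1/ε)∫₀^ε (∫ₛ^ε a⁻¹)^{1/2} (∫ₛ^ε a|f′|²)^{1/2} ds`. -/
theorem trace_average_abs_estimate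
    (ε : ℝ) (hε : 0 < ε) (a f f' : ℝ → ℝ)
    (ha_meas : Measurable a) (ha_pos : ∀ x ∈ Set.Ioc (0 : ℝ) ε, 0 < a x)
    (hf : ∀ x ∈ Set.Ioc (0 : ℝ) ε, HasDerivAt f (f' x) x)
    (hf'c : ContinuousOn f' (Set.Ioc 0 ε))
    (hinner : ∀ s ∈ Set.Ioc (0 : ℝ) ε, IntegrableOn (fun σ => (a σ)⁻¹) (Set.Ioc s ε))
    (henergy : IntegrableOn (fun σ => a σ * (f' σ) ^ 2) (Set.Ioc 0 ε))
    (houter : IntegrableOn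
      (fun s => Real.sqrt (∫ σ in Set.Ioc s ε, (a σ)⁻¹) *
        Real.sqrt (∫ σ in Set.Ioc s ε, a σ * (f' σ) ^ 2)) (Set.Ioc 0 ε)) :
    |f ε - (1/ε) * ∫ s in Set.Ioc (0 : ℝ) ε, f s| ≤
      (1/ε) * ∫ s in Set.Ioc (0 : ℝ) ε,
        Real.sqrt (∫ σ in Set.Ioc s ε, (a σ)⁻¹) *
          Real.sqrt (∫ σ in Set.Ioc s ε, a σ * (f' σ) ^ 2) :=
  trace_average_abs_estimate_general ε hε a f f' ha_pos hf hf'c hinner henergy houter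
end

section
/- Let N ≥ 2 and let Ω = 𝕋^{N−1} × (0,1), where 𝕋^{N−1} = ℝ^{N−1}/ℤ^{N−1} is the flat torus with its Haar (Lebesgue) measure; write points of Ω as x = (x′, x_N). For each ε ∈ (0,1/2) let a_ε : (0,1) → (0,∞) be measurable, and suppose that (1/ε)∫₀^ε ∫ₛ^ε a_ε(σ)⁻¹ dσ ds → 0 as ε → 0⁺. Let M < ∞ and for each ε ∈ (0,1/2) let u^ε : 𝕋^{N−1} × (0,1) → ℝ be continuously differentiable with ∫_Ω a_ε(x_N) |∇u^ε(x)|² dx ≤ 2M for all ε. Then ∫_{𝕋^{N−1}} ( u^ε(x′, ε) − (1/ε)∫₀^ε u^ε(x′, s) ds )² dx′ → 0 as ε → 0⁺. -/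
open MeasureTheory
open scoped ENNReal
noncomputable section

/-- Fundamental domain `[0,1)^n` of the flat torus `𝕋^n = ℝ^n/ℤ^n`. -/
def unitBox (n : ℕ) : Set (Fin n → ℝ) := Set.univ.pi fun _ => Set.Ico (0:ℝ) 1

/-- The flat cylinder `Ω = 𝕋^n × (0,1)`, realized as the fundamental domain
`[0,1)^n × (0,1)` inside `ℝ^n × ℝ`. -/
def cyl (n : ℕ) : Set ((Fin n → ℝ) × ℝ) := (unitBox n) ×ˢ Set.Ioo (0:ℝ) 1

/-- The `i`-th coordinate direction in `ℝ^n × ℝ`: for `i < n` the horizontal unit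
vector `(e_i, 0)`, and for `i = n` the vertical unit vector `(0, 1)`. -/
def dirVec (n : ℕ) (i : Fin (n + 1)) : (Fin n → ℝ) × ℝ :=
  Fin.lastCases ((0 : Fin n → ℝ), (1 : ℝ)) (fun j => (Pi.single j (1:ℝ), (0:ℝ))) i


/-! Fix `x'` and put `f t = u (x', t)`. The trace minus the average is the mean over `s ∈ (0, ε]`
of `f ε - f s = ∫ₛ^ε ∂ₙu`, and Cauchy–Schwarz with the weight `a_ε` gives
`|f ε - f s|² ≤ (∫ₛ^ε a_ε⁻¹) · ∫₀¹ a_ε |∂ₙu(x', ·)|²`. Averaging in `s` (Jensen) and integrating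
in `x'` bounds the squared `L²` distance by `φ(ε) · 2M`, where
`φ(ε) = (1/ε)∫₀^ε ∫ₛ^ε a_ε⁻¹ → 0` is the non-degeneracy quantity. -/

open Set

namespace MeasureTheory

variable {α : Type*} [MeasurableSpace α] {μ : Measure α}

theorem sq_lintegral_mul_le {f g : α → ℝ≥0∞} (hf : AEMeasurable f μ) (hg : AEMeasurable g μ) :
    (∫⁻ x, f x * g x ∂μ) ^ 2 ≤ (∫⁻ x, f x ^ 2 ∂μ) * ∫⁻ x, g x ^ 2 ∂μ := by
  have hpow : ∀ y : ℝ≥0∞, y ^ (2 : ℝ) = y ^ 2 := fun y => ENNReal.rpow_natCast y 2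
  have hsqrt : ∀ y : ℝ≥0∞, (y ^ (1 / 2 : ℝ)) ^ 2 = y := fun y => by
    rw [← hpow, ← ENNReal.rpow_mul]; norm_num
  have holder := ENNReal.lintegral_mul_le_Lp_mul_Lq μ Real.HolderConjugate.two_two hf hg
  simp only [Pi.mul_apply, hpow] at holder
  calc (∫⁻ x, f x * g x ∂μ) ^ 2
      ≤ ((∫⁻ x, f x ^ 2 ∂μ) ^ (1 / 2 : ℝ) * (∫⁻ x, g x ^ 2 ∂μ) ^ (1 / 2 : ℝ)) ^ 2 := by
        gcongr
    _ = (∫⁻ x, f x ^ 2 ∂μ) * ∫⁻ x, g x ^ 2 ∂μ := by rw [mul_pow, hsqrt, hsqrt]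

theorem sq_lintegral_le_measure_univ_mul {f : α → ℝ≥0∞} (hf : AEMeasurable f μ) :
    (∫⁻ x, f x ∂μ) ^ 2 ≤ μ univ * ∫⁻ x, f x ^ 2 ∂μ := by
  simpa [mul_comm] using sq_lintegral_mul_le (aemeasurable_const (b := (1 : ℝ≥0∞))) hf

theorem sq_lintegral_enorm_le_weighted {w g : α → ℝ} (hw : AEMeasurable w μ)
    (hg : AEMeasurable g μ) (hw_pos : ∀ᵐ x ∂μ, 0 < w x) :
    (∫⁻ x, ‖g x‖ₑ ∂μ) ^ 2 ≤
      (∫⁻ x, (ENNReal.ofReal (w x))⁻¹ ∂μ) * ∫⁻ x, ENNReal.ofReal (w x * g x ^ 2) ∂μ := by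
  have hfactor : ∀ᵐ x ∂μ, ‖g x‖ₑ =
      ENNReal.ofReal √(w x)⁻¹ * ENNReal.ofReal (√(w x) * |g x|) := by
    filter_upwards [hw_pos] with x hx
    rw [Real.enorm_eq_ofReal_abs, ← ENNReal.ofReal_mul (by positivity), ← mul_assoc,
      ← Real.sqrt_mul (by positivity), inv_mul_cancel₀ hx.ne', Real.sqrt_one, one_mul]
  have hinv : ∀ᵐ x ∂μ, ENNReal.ofReal √(w x)⁻¹ ^ 2 = (ENNReal.ofReal (w x))⁻¹ := by
    filter_upwards [hw_pos] with x hx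
    rw [← ENNReal.ofReal_pow (by positivity), Real.sq_sqrt (by positivity),
      ENNReal.ofReal_inv_of_pos hx]
  have henergy : ∀ᵐ x ∂μ, ENNReal.ofReal (√(w x) * |g x|) ^ 2 = ENNReal.ofReal (w x * g x ^ 2) := by
    filter_upwards [hw_pos] with x hx
    rw [← ENNReal.ofReal_pow (by positivity), mul_pow, Real.sq_sqrt hx.le, sq_abs]
  rw [lintegral_congr_ae hfactor, ← lintegral_congr_ae hinv, ← lintegral_congr_ae henergy]
  exact sq_lintegral_mul_le (by fun_prop) (by fun_prop)

end MeasureTheory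

section BoundaryLayer

variable {f f' w : ℝ → ℝ} {ε : ℝ}

theorem ofReal_sq_eq_enorm_sq (x : ℝ) : ENNReal.ofReal (x ^ 2) = ‖x‖ₑ ^ 2 := by
  rw [← enorm_pow, Real.enorm_of_nonneg (sq_nonneg x)]

theorem ofReal_sq_sub_le_of_hasDerivAt (hf : ∀ t ∈ Ioc 0 ε, HasDerivAt f (f' t) t)
    (hf' : ContinuousOn f' (Ioc 0 ε)) (hw : AEMeasurable w (volume.restrict (Ioc 0 ε)))
    (hw_pos : ∀ t ∈ Ioc 0 ε, 0 < w t) {s : ℝ} (hs : s ∈ Ioc 0 ε) :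
    ENNReal.ofReal ((f ε - f s) ^ 2) ≤
      (∫⁻ σ in Ioc s ε, (ENNReal.ofReal (w σ))⁻¹) *
        ∫⁻ σ in Ioc 0 ε, ENNReal.ofReal (w σ * f' σ ^ 2) := by
  have hsub : Ioc s ε ⊆ Ioc 0 ε := Ioc_subset_Ioc_left hs.1.le
  have hIcc : uIcc s ε ⊆ Ioc 0 ε := by
    rw [uIcc_of_le hs.2]
    exact fun t ht => ⟨hs.1.trans_le ht.1, ht.2⟩
  have hftc : f ε - f s = ∫ σ in Ioc s ε, f' σ := by
    rw [← intervalIntegral.integral_of_le hs.2, intervalIntegral.integral_eq_sub_of_hasDerivAt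
      (fun t ht => hf t (hIcc ht)) (hf'.mono hIcc).intervalIntegrable]
  calc ENNReal.ofReal ((f ε - f s) ^ 2) = ‖∫ σ in Ioc s ε, f' σ‖ₑ ^ 2 := by
        rw [hftc, ofReal_sq_eq_enorm_sq]
    _ ≤ (∫⁻ σ in Ioc s ε, ‖f' σ‖ₑ) ^ 2 := by gcongr; exact enorm_integral_le_lintegral_enorm _
    _ ≤ (∫⁻ σ in Ioc s ε, (ENNReal.ofReal (w σ))⁻¹) *
          ∫⁻ σ in Ioc s ε, ENNReal.ofReal (w σ * f' σ ^ 2) :=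
        sq_lintegral_enorm_le_weighted (hw.mono_measure (Measure.restrict_mono hsub le_rfl))
          ((hf'.mono hsub).aemeasurable measurableSet_Ioc)
          ((ae_restrict_iff' measurableSet_Ioc).2 (.of_forall fun t ht => hw_pos t (hsub ht)))
    _ ≤ _ := by gcongr

theorem ofReal_sq_sub_average_le (hε : 0 < ε) (hf : ∀ t ∈ Ioc 0 ε, HasDerivAt f (f' t) t)
    (hf' : ContinuousOn f' (Ioc 0 ε)) (hw : AEMeasurable w (volume.restrict (Ioc 0 ε)))
    (hw_pos : ∀ t ∈ Ioc 0 ε, 0 < w t) :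
    ENNReal.ofReal ((f ε - (1 / ε) * ∫ s in Ioc 0 ε, f s) ^ 2) ≤
      (ENNReal.ofReal ε)⁻¹ * (∫⁻ s in Ioc 0 ε, ∫⁻ σ in Ioc s ε, (ENNReal.ofReal (w σ))⁻¹) *
        ∫⁻ σ in Ioc 0 ε, ENNReal.ofReal (w σ * f' σ ^ 2) := by
  set X : ℝ → ℝ≥0∞ := fun s => ∫⁻ σ in Ioc s ε, (ENNReal.ofReal (w σ))⁻¹
  set G := ∫⁻ σ in Ioc 0 ε, ENNReal.ofReal (w σ * f' σ ^ 2)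
  have hX : Antitone X := fun s t hst => lintegral_mono_set (Ioc_subset_Ioc_left hst)
  have hD : ∫⁻ s in Ioc 0 ε, ‖f ε - f s‖ₑ ^ 2 ≤ (∫⁻ s in Ioc 0 ε, X s) * G :=
    calc ∫⁻ s in Ioc 0 ε, ‖f ε - f s‖ₑ ^ 2 ≤ ∫⁻ s in Ioc 0 ε, X s * G :=
          setLIntegral_mono' measurableSet_Ioc fun s hs => by
            rw [← ofReal_sq_eq_enorm_sq]; exact ofReal_sq_sub_le_of_hasDerivAt hf hf' hw hw_pos hs
      _ = (∫⁻ s in Ioc 0 ε, X s) * G := lintegral_mul_const _ hX.measurable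
  rcases eq_or_ne ((∫⁻ s in Ioc 0 ε, X s) * G) ⊤ with htop | hfin
  · rw [mul_assoc, htop, ENNReal.mul_top (ENNReal.inv_ne_zero.2 ENNReal.ofReal_ne_top)]
    exact le_top
  have hvol : volume (Ioc 0 ε) = ENNReal.ofReal ε := by simp [Real.volume_Ioc]
  have hfcont : ContinuousOn f (Ioc 0 ε) := fun t ht => (hf t ht).continuousAt.continuousWithinAt
  have hDmeas : AEMeasurable (fun s => f ε - f s) (volume.restrict (Ioc 0 ε)) :=
    (continuousOn_const.sub hfcont).aemeasurable measurableSet_Ioc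
  have hJensen := sq_lintegral_le_measure_univ_mul hDmeas.enorm
  rw [Measure.restrict_apply_univ, hvol] at hJensen
  -- `f` may blow up at `0`: its integrability comes from the square-integrability of `f ε - f ·`.
  have hDint : IntegrableOn (fun s => f ε - f s) (Ioc 0 ε) := by
    refine ⟨hDmeas.aestronglyMeasurable, hasFiniteIntegral_iff_enorm.2 ?_⟩
    have := hJensen.trans_lt (ENNReal.mul_lt_top ENNReal.ofReal_lt_top (hD.trans_lt hfin.lt_top))
    exact (ENNReal.pow_lt_top_iff.1 this).resolve_right two_ne_zero
  have hconst : IntegrableOn (fun _ => f ε) (Ioc 0 ε) := integrableOn_const (by simp [hvol])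
  have hfint : IntegrableOn f (Ioc 0 ε) :=
    (hconst.sub hDint).congr_fun (fun s _ => sub_sub_cancel _ _) measurableSet_Ioc
  have havg : f ε - (1 / ε) * ∫ s in Ioc 0 ε, f s = (1 / ε) * ∫ s in Ioc 0 ε, (f ε - f s) := by
    rw [integral_sub hconst hfint, setIntegral_const,
      Real.volume_real_Ioc_of_le hε.le, smul_eq_mul]
    field_simp
    ring
  calc ENNReal.ofReal ((f ε - (1 / ε) * ∫ s in Ioc 0 ε, f s) ^ 2)
      = (ENNReal.ofReal ε)⁻¹ ^ 2 * ‖∫ s in Ioc 0 ε, (f ε - f s)‖ₑ ^ 2 := by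
        rw [havg, ofReal_sq_eq_enorm_sq, enorm_mul, mul_pow, one_div,
          Real.enorm_of_nonneg (inv_nonneg.2 hε.le), ENNReal.ofReal_inv_of_pos hε]
    _ ≤ (ENNReal.ofReal ε)⁻¹ ^ 2 * (ENNReal.ofReal ε * ((∫⁻ s in Ioc 0 ε, X s) * G)) := by
        gcongr
        exact (pow_le_pow_left' (enorm_integral_le_lintegral_enorm _) 2).trans
          (hJensen.trans (by gcongr))
    _ = (ENNReal.ofReal ε)⁻¹ * (∫⁻ s in Ioc 0 ε, X s) * G := by
        rw [sq, mul_assoc, ENNReal.inv_mul_cancel_left, mul_assoc]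
        · simpa using hε
        · exact ENNReal.ofReal_ne_top

end BoundaryLayer

section Cylinder

variable {E : Type*} [NormedAddCommGroup E] [NormedSpace ℝ E]

theorem DifferentiableAt.hasDerivAt_comp_prodMk {v : E × ℝ → ℝ} {x : E} {t : ℝ}
    (hv : DifferentiableAt ℝ v (x, t)) :
    HasDerivAt (fun t => v (x, t)) (fderiv ℝ v (x, t) (0, 1)) t :=
  hv.hasFDerivAt.comp_hasDerivAt t ((hasDerivAt_const t x).prodMk (hasDerivAt_id t))

variable [MeasurableSpace E] [OpensMeasurableSpace E] {μ : Measure E} [SFinite μ]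

theorem setLIntegral_sq_trace_sub_average_le {v : E × ℝ → ℝ} {w : ℝ → ℝ} {ε : ℝ} (s : Set E)
    (hε : ε ∈ Ioo 0 1) (hv : ContDiffOn ℝ 1 v {p | p.2 ∈ Ioo 0 1}) (hw : Measurable w)
    (hw_pos : ∀ t ∈ Ioo 0 1, 0 < w t) :
    ∫⁻ x in s, ENNReal.ofReal ((v (x, ε) - (1 / ε) * ∫ t in Ioc 0 ε, v (x, t)) ^ 2) ∂μ ≤
      (ENNReal.ofReal ε)⁻¹ * (∫⁻ t in Ioc 0 ε, ∫⁻ σ in Ioc t ε, (ENNReal.ofReal (w σ))⁻¹) *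
        ∫⁻ p in s ×ˢ Ioo 0 1, ENNReal.ofReal (w p.2 * fderiv ℝ v p (0, 1) ^ 2) ∂μ.prod volume := by
  set φ := (ENNReal.ofReal ε)⁻¹ * (∫⁻ t in Ioc 0 ε, ∫⁻ σ in Ioc t ε, (ENNReal.ofReal (w σ))⁻¹)
  set F : E × ℝ → ℝ≥0∞ := fun p => ENNReal.ofReal (w p.2 * fderiv ℝ v p (0, 1) ^ 2)
  have hF : Measurable F := by fun_prop
  have hopen : IsOpen {p : E × ℝ | p.2 ∈ Ioo 0 1} := isOpen_Ioo.preimage continuous_snd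
  have hIoc : Ioc 0 ε ⊆ Ioo 0 1 := Ioc_subset_Ioo_right hε.2
  have hpointwise (x : E) :
      ENNReal.ofReal ((v (x, ε) - (1 / ε) * ∫ t in Ioc 0 ε, v (x, t)) ^ 2) ≤
        φ * ∫⁻ t in Ioo 0 1, F (x, t) := by
    have hderiv : ∀ t ∈ Ioo 0 1, HasDerivAt (fun t => v (x, t)) (fderiv ℝ v (x, t) (0, 1)) t :=
      fun t ht =>
        ((hv.contDiffAt (hopen.mem_nhds ht)).differentiableAt one_ne_zero).hasDerivAt_comp_prodMk
    have hcont : ContinuousOn (fun t => fderiv ℝ v (x, t) (0, 1)) (Ioo 0 1) :=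
      ((hv.continuousOn_fderiv_of_isOpen hopen le_rfl).clm_apply continuousOn_const).comp
        (continuousOn_const.prodMk continuousOn_id) fun t ht => ht
    calc _ ≤ φ * ∫⁻ t in Ioc 0 ε, F (x, t) :=
          ofReal_sq_sub_average_le hε.1 (fun t ht => hderiv t (hIoc ht)) (hcont.mono hIoc)
            hw.aemeasurable fun t ht => hw_pos t (hIoc ht)
      _ ≤ _ := by gcongr
  calc _ ≤ ∫⁻ x in s, (φ * ∫⁻ t in Ioo 0 1, F (x, t)) ∂μ := lintegral_mono hpointwise
    _ = φ * ∫⁻ p in s ×ˢ Ioo 0 1, F p ∂μ.prod volume := by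
      rw [lintegral_const_mul _ (hF.lintegral_prod_right' (ν := volume.restrict (Ioo 0 1))),
        setLIntegral_prod _ hF.aemeasurable]

end Cylinder

theorem trace_eq_average_limit_general
    (n : ℕ) (M : ℝ)
    (a : ℝ → ℝ → ℝ)
    (ha_meas : ∀ ε ∈ Set.Ioo (0:ℝ) (1/2), Measurable (a ε))
    (ha_pos : ∀ ε ∈ Set.Ioo (0:ℝ) (1/2), ∀ x ∈ Set.Ioo (0:ℝ) 1, 0 < a ε x)
    (ha_nd : Filter.Tendsto
      (fun ε => (ENNReal.ofReal ε)⁻¹ *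
        ∫⁻ s in Set.Ioc (0:ℝ) ε, ∫⁻ σ in Set.Ioc s ε, (ENNReal.ofReal (a ε σ))⁻¹)
      (nhdsWithin 0 (Set.Ioo 0 (1/2))) (nhds 0))
    (u : ℝ → ((Fin n → ℝ) × ℝ) → ℝ)
    (hu_smooth : ∀ ε ∈ Set.Ioo (0:ℝ) (1/2),
      ContDiffOn ℝ 1 (u ε) {p : (Fin n → ℝ) × ℝ | p.2 ∈ Set.Ioo (0:ℝ) 1})
    (hu_energy : ∀ ε ∈ Set.Ioo (0:ℝ) (1/2),
      ∫⁻ p in cyl n,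
          ENNReal.ofReal (a ε p.2 * ∑ i : Fin (n+1), (fderiv ℝ (u ε) p (dirVec n i)) ^ 2)
        ≤ ENNReal.ofReal (2 * M)) :
    Filter.Tendsto
      (fun ε => ∫⁻ x' in unitBox n,
        ENNReal.ofReal ((u ε (x', ε) - (1/ε) * ∫ s in Set.Ioc (0:ℝ) ε, u ε (x', s)) ^ 2))
      (nhdsWithin 0 (Set.Ioo 0 (1/2))) (nhds 0) := by
  have hbound : ∀ ε ∈ Set.Ioo (0:ℝ) (1/2),
      ∫⁻ x' in unitBox n,
          ENNReal.ofReal ((u ε (x', ε) - (1/ε) * ∫ s in Set.Ioc (0:ℝ) ε, u ε (x', s)) ^ 2) ≤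
        (ENNReal.ofReal ε)⁻¹ *
          (∫⁻ s in Set.Ioc (0:ℝ) ε, ∫⁻ σ in Set.Ioc s ε, (ENNReal.ofReal (a ε σ))⁻¹) *
            ENNReal.ofReal (2 * M) := by
    intro ε hε
    refine (setLIntegral_sq_trace_sub_average_le (unitBox n) ⟨hε.1, hε.2.trans one_half_lt_one⟩
      (hu_smooth ε hε) (ha_meas ε hε) (ha_pos ε hε)).trans ?_
    gcongr
    have hcyl : MeasurableSet (cyl n) :=
      (MeasurableSet.univ_pi fun _ => measurableSet_Ico).prod measurableSet_Ioo
    refine le_trans (setLIntegral_mono' hcyl fun p hp => ?_) (hu_energy ε hε)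
    have hlast : dirVec n (Fin.last n) = (0, 1) := Fin.lastCases_last
    have hvertical : fderiv ℝ (u ε) p (0, 1) ^ 2 ≤
        ∑ i : Fin (n+1), (fderiv ℝ (u ε) p (dirVec n i)) ^ 2 :=
      hlast ▸ Finset.single_le_sum (f := fun i => (fderiv ℝ (u ε) p (dirVec n i)) ^ 2)
        (fun i _ => sq_nonneg _) (Finset.mem_univ (Fin.last n))
    exact ENNReal.ofReal_le_ofReal (mul_le_mul_of_nonneg_left hvertical (ha_pos ε hε p.2 hp.2).le)
  have hlim := ENNReal.Tendsto.mul_const ha_nd (Or.inr (ENNReal.ofReal_ne_top (r := 2 * M)))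
  rw [zero_mul] at hlim
  exact tendsto_of_tendsto_of_tendsto_of_le_of_le' tendsto_const_nhds hlim
    (.of_forall fun _ => zero_le) (eventually_nhdsWithin_of_forall hbound)

/-- For a family of weights `a_ε` on `(0,1)` satisfying the non-degeneracy condition
`(1/ε)∫₀^ε ∫ₛ^ε a_ε(σ)⁻¹ dσ ds → 0` (exponent `p = 1`), and a family `u^ε` of `C¹`
functions on the cylinder `Ω = 𝕋^n × (0,1)` (periodic in the torus directions), lying in
`L²(Ω)` and with uniformly bounded weighted energies `∫_Ω a_ε|∇u^ε|² ≤ 2M`, the traces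
at height `ε` and the boundary-layer averages are asymptotically equal in `L²(𝕋^n)`:
`∫_{𝕋ⁿ} (u^ε(x′,ε) − (1/ε)∫₀^ε u^ε(x′,s) ds)² dx′ → 0` as `ε → 0⁺`. -/
theorem trace_eq_average_limit
    (n : ℕ) (hn : 1 ≤ n) (M : ℝ)
    (a : ℝ → ℝ → ℝ)
    (ha_meas : ∀ ε ∈ Set.Ioo (0:ℝ) (1/2), Measurable (a ε))
    (ha_pos : ∀ ε ∈ Set.Ioo (0:ℝ) (1/2), ∀ x ∈ Set.Ioo (0:ℝ) 1, 0 < a ε x)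
    (ha_nd : Filter.Tendsto
      (fun ε => (ENNReal.ofReal ε)⁻¹ *
        ∫⁻ s in Set.Ioc (0:ℝ) ε, ∫⁻ σ in Set.Ioc s ε, (ENNReal.ofReal (a ε σ))⁻¹)
      (nhdsWithin 0 (Set.Ioo 0 (1/2))) (nhds 0))
    (u : ℝ → ((Fin n → ℝ) × ℝ) → ℝ)
    (hu_smooth : ∀ ε ∈ Set.Ioo (0:ℝ) (1/2),
      ContDiffOn ℝ 1 (u ε) {p : (Fin n → ℝ) × ℝ | p.2 ∈ Set.Ioo (0:ℝ) 1})
    (hu_per : ∀ ε ∈ Set.Ioo (0:ℝ) (1/2),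
      ∀ (p : (Fin n → ℝ) × ℝ) (i : Fin n), u ε (p.1 + Pi.single i 1, p.2) = u ε p)
    (hu_L2 : ∀ ε ∈ Set.Ioo (0:ℝ) (1/2),
      ∫⁻ p in cyl n, ENNReal.ofReal ((u ε p) ^ 2) < ⊤)
    (hu_energy : ∀ ε ∈ Set.Ioo (0:ℝ) (1/2),
      ∫⁻ p in cyl n,
          ENNReal.ofReal (a ε p.2 * ∑ i : Fin (n+1), (fderiv ℝ (u ε) p (dirVec n i)) ^ 2)
        ≤ ENNReal.ofReal (2 * M)) :
    Filter.Tendsto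
      (fun ε => ∫⁻ x' in unitBox n,
        ENNReal.ofReal ((u ε (x', ε) - (1/ε) * ∫ s in Set.Ioc (0:ℝ) ε, u ε (x', s)) ^ 2))
      (nhdsWithin 0 (Set.Ioo 0 (1/2))) (nhds 0) :=
  trace_eq_average_limit_general n M a ha_meas ha_pos ha_nd u hu_smooth hu_energy
end
end

section
/- Let ε ∈ (0,1/2) and define a : [0,1] → ℝ by a(x) = min(x/ε, (1−x)/ε, 1). Let u : [0,1] → ℝ be twice continuously differentiable. Then the function x ↦ a(x)u′(x) is differentiable at every x ∈ (0,1) ∖ {ε, 1−ε}, and ∫₀¹ ((a u′)′(x))² dx = ∫₀¹ a(x)² u″(x)² dx + (1/ε)( u′(ε)² + u′(1−ε)² ), where the integrand on the left-hand side is defined almost everywhere (everywhere except at x = ε and x = 1−ε). -/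
/-!
On each of the pieces `[0, ε]`, `[ε, 1 - ε]`, `[1 - ε, 1]` the weight `a` is affine with slope
`c ∈ {1/ε, 0, -1/ε}`, so there `(a u')' = c u' + a u''` and
`((a u')')² = a² u''² + c (a u'²)'`. Integrating piece by piece, the boundary terms `c [a u'²]`
give `u'(ε)²/ε` and `u'(1 - ε)²/ε`, because `a` vanishes at `0` and `1` and equals `1` at `ε`
and `1 - ε`.
-/

open MeasureTheory
noncomputable section

def aWt (ε t : ℝ) : ℝ := min (t / ε) (min ((1 - t) / ε) 1)

open Set intervalIntegral

section AffinePiece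

variable {a w v v' : ℝ → ℝ} {c p q : ℝ}

theorem hasDerivAt_mul_of_eqOn_Ioo {x d : ℝ} (hx : x ∈ Ioo p q) (heq : EqOn a w (Ioo p q))
    (hw : HasDerivAt w c x) (hv : HasDerivAt v d x) :
    HasDerivAt (fun y => a y * v y) (c * v x + w x * d) x :=
  (hw.mul hv).congr_of_eventuallyEq <|
    Filter.mem_of_superset (Ioo_mem_nhds hx.1 hx.2) fun y hy => by simp [heq hy]

theorem eqOn_deriv_mul_sq (heq : EqOn a w (Icc p q)) (hw : ∀ x, HasDerivAt w c x)
    (hv : ∀ x ∈ Ioo p q, HasDerivAt v (v' x) x) :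
    EqOn (fun x => deriv (fun y => a y * v y) x ^ 2) (fun x => (c * v x + w x * v' x) ^ 2)
      (Ioo p q) := fun x hx => by
  simp only [(hasDerivAt_mul_of_eqOn_Ioo hx (heq.mono Ioo_subset_Icc_self) (hw x)
    (hv x hx)).deriv]

theorem integral_sq_deriv_mul_of_hasDerivAt_const (hpq : p ≤ q) (hw : ∀ x, HasDerivAt w c x)
    (hv : ∀ x ∈ Ioo p q, HasDerivAt v (v' x) x) (hvc : ContinuousOn v (Icc p q))
    (hv'c : ContinuousOn v' (Icc p q)) :
    ∫ x in p..q, (c * v x + w x * v' x) ^ 2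
      = (∫ x in p..q, w x ^ 2 * v' x ^ 2) + c * (w q * v q ^ 2 - w p * v p ^ 2) := by
  have hwc : Continuous w := continuous_iff_continuousAt.2 fun x => (hw x).continuousAt
  have hftc : ∫ x in p..q, (c * v x ^ 2 + w x * (2 * v x * v' x))
      = w q * v q ^ 2 - w p * v p ^ 2 := by
    refine integral_eq_sub_of_hasDerivAt_of_le hpq (hwc.continuousOn.mul (hvc.pow 2))
      (fun x hx => ?_) ?_
    · simpa using (hw x).mul ((hv x hx).pow 2)
    · refine ContinuousOn.intervalIntegrable ?_
      rw [uIcc_of_le hpq]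
      fun_prop
  have hint : IntervalIntegrable (fun x => w x ^ 2 * v' x ^ 2) volume p q := by
    refine ContinuousOn.intervalIntegrable ?_
    rw [uIcc_of_le hpq]
    fun_prop
  rw [← hftc, ← intervalIntegral.integral_const_mul, ← intervalIntegral.integral_add hint]
  · congr 1 with x
    ring
  · refine ContinuousOn.intervalIntegrable ?_
    rw [uIcc_of_le hpq]
    fun_prop

theorem intervalIntegrable_deriv_mul_sq (hpq : p ≤ q) (heq : EqOn a w (Icc p q))
    (hw : ∀ x, HasDerivAt w c x) (hv : ∀ x ∈ Ioo p q, HasDerivAt v (v' x) x)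
    (hvc : ContinuousOn v (Icc p q)) (hv'c : ContinuousOn v' (Icc p q)) :
    IntervalIntegrable (fun x => deriv (fun y => a y * v y) x ^ 2) volume p q := by
  have hwc : Continuous w := continuous_iff_continuousAt.2 fun x => (hw x).continuousAt
  refine ContinuousOn.intervalIntegrable (u := fun x => (c * v x + w x * v' x) ^ 2) ?_
    |>.congr_uIoo ?_
  · rw [uIcc_of_le hpq]
    fun_prop
  · rw [uIoo_of_le hpq]
    exact (eqOn_deriv_mul_sq heq hw hv).symm

theorem integral_deriv_mul_sq (hpq : p ≤ q) (heq : EqOn a w (Icc p q))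
    (hw : ∀ x, HasDerivAt w c x) (hv : ∀ x ∈ Ioo p q, HasDerivAt v (v' x) x)
    (hvc : ContinuousOn v (Icc p q)) (hv'c : ContinuousOn v' (Icc p q)) :
    ∫ x in p..q, deriv (fun y => a y * v y) x ^ 2
      = (∫ x in p..q, a x ^ 2 * v' x ^ 2) + c * (w q * v q ^ 2 - w p * v p ^ 2) := by
  rw [integral_congr_Ioo_of_le hpq (eqOn_deriv_mul_sq heq hw hv),
    integral_sq_deriv_mul_of_hasDerivAt_const hpq hw hv hvc hv'c]
  congr 1
  refine integral_congr fun x hx => ?_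
  rw [uIcc_of_le hpq] at hx
  simp only [heq hx]

end AffinePiece

theorem setIntegral_Ioo_eq_add_add {f : ℝ → ℝ} {a b c d : ℝ} (hab : a ≤ b) (hbc : b ≤ c)
    (hcd : c ≤ d) (h₁ : IntervalIntegrable f volume a b) (h₂ : IntervalIntegrable f volume b c)
    (h₃ : IntervalIntegrable f volume c d) :
    ∫ x in Ioo a d, f x = (∫ x in a..b, f x) + (∫ x in b..c, f x) + ∫ x in c..d, f x := by
  rw [← integral_Ioc_eq_integral_Ioo, ← intervalIntegral.integral_of_le (by linarith),
    integral_add_adjacent_intervals h₁ h₂, integral_add_adjacent_intervals (h₁.trans h₂) h₃]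

section Weight

variable {ε x : ℝ}

theorem continuous_aWt : Continuous (aWt ε) := by
  unfold aWt
  fun_prop

theorem eqOn_aWt_Iic (hε : 0 < ε) (hε' : ε ≤ 1 - ε) : EqOn (aWt ε) (fun x => x / ε) (Iic ε) :=
  fun x (hx : x ≤ ε) => by
    have h₁ : x / ε ≤ 1 := by rw [div_le_one hε]; exact hx
    have h₂ : x / ε ≤ (1 - x) / ε := by gcongr; linarith
    exact min_eq_left (le_min h₂ h₁)

theorem eqOn_aWt_Icc (hε : 0 < ε) : EqOn (aWt ε) (fun _ => 1) (Icc ε (1 - ε)) :=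
  fun x hx => by
    have h₁ : 1 ≤ x / ε := by rw [le_div_iff₀ hε]; linarith [hx.1]
    have h₂ : 1 ≤ (1 - x) / ε := by rw [le_div_iff₀ hε]; linarith [hx.2]
    rw [aWt, min_eq_right h₂, min_eq_right h₁]

theorem eqOn_aWt_Ici (hε : 0 < ε) (hε' : ε ≤ 1 - ε) :
    EqOn (aWt ε) (fun x => (1 - x) / ε) (Ici (1 - ε)) := fun x (hx : 1 - ε ≤ x) => by
  have h₁ : (1 - x) / ε ≤ 1 := by rw [div_le_one hε]; linarith
  have h₂ : (1 - x) / ε ≤ x / ε := by gcongr; linarith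
  rw [aWt, min_eq_left h₁, min_eq_right h₂]

theorem differentiableAt_aWt (hε : 0 < ε) (hε' : ε ≤ 1 - ε) (hx : x ≠ ε) (hx' : x ≠ 1 - ε) :
    DifferentiableAt ℝ (aWt ε) x := by
  rcases hx.lt_or_gt with h | h
  · exact (differentiableAt_id.div_const ε).congr_of_eventuallyEq <|
      Filter.mem_of_superset (Iio_mem_nhds h) fun y hy =>
        eqOn_aWt_Iic hε hε' (Iio_subset_Iic_self hy)
  rcases hx'.lt_or_gt with h' | h'
  · exact (differentiableAt_const 1).congr_of_eventuallyEq <|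
      Filter.mem_of_superset (Ioo_mem_nhds h h') fun y hy =>
        eqOn_aWt_Icc hε (Ioo_subset_Icc_self hy)
  · exact ((differentiableAt_id.const_sub 1).div_const ε).congr_of_eventuallyEq <|
      Filter.mem_of_superset (Ioi_mem_nhds h') fun y hy =>
        eqOn_aWt_Ici hε hε' (Ioi_subset_Ici_self hy)

theorem integral_sq_deriv_aWt_mul {v v' : ℝ → ℝ} (hε : 0 < ε) (hε' : ε ≤ 1 - ε)
    (hv : ∀ x ∈ Ioo 0 1, HasDerivAt v (v' x) x) (hvc : ContinuousOn v (Icc 0 1))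
    (hv'c : ContinuousOn v' (Icc 0 1)) :
    ∫ x in Ioo 0 1, deriv (fun y => aWt ε y * v y) x ^ 2
      = (∫ x in Ioo 0 1, aWt ε x ^ 2 * v' x ^ 2) + 1 / ε * (v ε ^ 2 + v (1 - ε) ^ 2) := by
  have piece {p q c : ℝ} {w : ℝ → ℝ} (hp : 0 ≤ p) (hpq : p ≤ q) (hq : q ≤ 1)
      (heq : EqOn (aWt ε) w (Icc p q)) (hw : ∀ x, HasDerivAt w c x) :
      IntervalIntegrable (fun x => deriv (fun y => aWt ε y * v y) x ^ 2) volume p q ∧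
      IntervalIntegrable (fun x => aWt ε x ^ 2 * v' x ^ 2) volume p q ∧
      ∫ x in p..q, deriv (fun y => aWt ε y * v y) x ^ 2
        = (∫ x in p..q, aWt ε x ^ 2 * v' x ^ 2) + c * (w q * v q ^ 2 - w p * v p ^ 2) := by
    have hsub : Icc p q ⊆ Icc 0 1 := Icc_subset_Icc hp hq
    have hvpq : ∀ x ∈ Ioo p q, HasDerivAt v (v' x) x := fun x hx =>
      hv x (Ioo_subset_Ioo hp hq hx)
    refine ⟨intervalIntegrable_deriv_mul_sq hpq heq hw hvpq (hvc.mono hsub) (hv'c.mono hsub),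
      ContinuousOn.intervalIntegrable ?_,
      integral_deriv_mul_sq hpq heq hw hvpq (hvc.mono hsub) (hv'c.mono hsub)⟩
    rw [uIcc_of_le hpq]
    exact (continuous_aWt.continuousOn.pow 2).mul ((hv'c.mono hsub).pow 2)
  obtain ⟨lhsL, rhsL, eqL⟩ := piece le_rfl hε.le (by linarith)
    ((eqOn_aWt_Iic hε hε').mono Icc_subset_Iic_self) fun x => (hasDerivAt_id x).div_const ε
  obtain ⟨lhsM, rhsM, eqM⟩ := piece hε.le hε' (by linarith) (eqOn_aWt_Icc hε)
    fun x => hasDerivAt_const x 1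
  obtain ⟨lhsR, rhsR, eqR⟩ := piece (by linarith) (by linarith) le_rfl
    ((eqOn_aWt_Ici hε hε').mono Icc_subset_Ici_self)
    fun x => ((hasDerivAt_id x).const_sub 1).div_const ε
  rw [setIntegral_Ioo_eq_add_add hε.le hε' (by linarith) lhsL lhsM lhsR,
    setIntegral_Ioo_eq_add_add hε.le hε' (by linarith) rhsL rhsM rhsR, eqL, eqM, eqR]
  field_simp
  ring

end Weight

theorem reilly_identity_1d_general
    (ε : ℝ) (hε : ε ∈ Set.Ioo (0:ℝ) (1/2))
    (u' u'' : ℝ → ℝ)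
    (hu'' : ∀ x ∈ Set.Icc (0:ℝ) 1, HasDerivWithinAt u' (u'' x) (Set.Icc 0 1) x)
    (hu''c : ContinuousOn u'' (Set.Icc 0 1)) :
    (∀ x ∈ Set.Ioo (0:ℝ) 1 \ {ε, 1 - ε},
        DifferentiableAt ℝ (fun y => aWt ε y * u' y) x) ∧
      ∫ x in Set.Ioo (0:ℝ) 1, (deriv (fun y => aWt ε y * u' y) x) ^ 2
        = (∫ x in Set.Ioo (0:ℝ) 1, (aWt ε x) ^ 2 * (u'' x) ^ 2)
          + (1/ε) * ((u' ε) ^ 2 + (u' (1 - ε)) ^ 2) := by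
  obtain ⟨hε0, hε2⟩ := hε
  have hε1 : ε ≤ 1 - ε := by linarith
  have hu'd : ∀ x ∈ Ioo (0:ℝ) 1, HasDerivAt u' (u'' x) x := fun x hx =>
    (hu'' x (Ioo_subset_Icc_self hx)).hasDerivAt (Icc_mem_nhds hx.1 hx.2)
  refine ⟨fun x ⟨hx, hxε⟩ => ?_,
    integral_sq_deriv_aWt_mul hε0 hε1 hu'd (fun x hx => (hu'' x hx).continuousWithinAt) hu''c⟩
  simp only [mem_insert_iff, mem_singleton_iff, not_or] at hxε
  exact (differentiableAt_aWt hε0 hε1 hxε.1 hxε.2).mul (hu'd x hx).differentiableAt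

/-- One-dimensional Reilly-type identity: for `u` twice continuously differentiable on
`[0,1]` and the weight `a(x) = min(x/ε, (1−x)/ε, 1)`, the function `a·u′` is
differentiable away from `x = ε, 1−ε`, and
`∫₀¹ ((a u′)′)² = ∫₀¹ a² (u″)² + (1/ε)(u′(ε)² + u′(1−ε)²)`. -/
theorem reilly_identity_1d
    (ε : ℝ) (hε : ε ∈ Set.Ioo (0:ℝ) (1/2))
    (u u' u'' : ℝ → ℝ)
    (hu' : ∀ x ∈ Set.Icc (0:ℝ) 1, HasDerivWithinAt u (u' x) (Set.Icc 0 1) x)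
    (hu'' : ∀ x ∈ Set.Icc (0:ℝ) 1, HasDerivWithinAt u' (u'' x) (Set.Icc 0 1) x)
    (hu''c : ContinuousOn u'' (Set.Icc 0 1)) :
    (∀ x ∈ Set.Ioo (0:ℝ) 1 \ {ε, 1 - ε},
        DifferentiableAt ℝ (fun y => aWt ε y * u' y) x) ∧
      ∫ x in Set.Ioo (0:ℝ) 1, (deriv (fun y => aWt ε y * u' y) x) ^ 2
        = (∫ x in Set.Ioo (0:ℝ) 1, (aWt ε x) ^ 2 * (u'' x) ^ 2)
          + (1/ε) * ((u' ε) ^ 2 + (u' (1 - ε)) ^ 2) :=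
  reilly_identity_1d_general ε hε u' u'' hu'' hu''c
end
end

section
/- Let ε ∈ (0,1/2) and define a : (0,1) → ℝ by a(x) = min(x/ε, (1−x)/ε, 1). Let u : (0,1) → ℝ be differentiable, assume ∫₀¹ a(x) u′(x)² dx < ∞, and assume that the function g(x) = a(x) u′(x) is differentiable on (0,1) ∖ {ε, 1−ε} with ∫₀¹ g′(x)² dx < ∞ and g(x) = g(1/2) + ∫_{1/2}^{x} g′(t) dt for all x ∈ (0,1). Then lim_{x→0⁺} a(x) u′(x) = 0 and lim_{x→1⁻} a(x) u′(x) = 0. -/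
/-!
Near `0` the weight is `x / ε`, so with `g = a u'` the energy density is `a u'² = g² · ε / x`.
Since `g' ∈ L² ⊆ L¹`, the primitive representation of `g` gives it a limit `L` at `0⁺`; if
`L ≠ 0`, then `g² ≥ L² / 2` near `0` and the energy would dominate `∫ ε / x = ∞`. Hence
`L = 0`, and symmetrically at `1`.
-/

open MeasureTheory
open scoped ENNReal
noncomputable section

open Set Filter Topology

section Weight

variable {ε x : ℝ}

lemma aWt_eq_left (hε : 0 < ε) (hxε : x ≤ ε) (hx : x ≤ 1 - x) : aWt ε x = x / ε := by
  have h₁ : x / ε ≤ (1 - x) / ε := by gcongr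
  have h₂ : x / ε ≤ 1 := (div_le_one hε).2 hxε
  exact min_eq_left (le_min h₁ h₂)

lemma aWt_eq_right (hε : 0 < ε) (hxε : 1 - x ≤ ε) (hx : 1 - x ≤ x) :
    aWt ε x = (1 - x) / ε := by
  have h₁ : (1 - x) / ε ≤ 1 := (div_le_one hε).2 hxε
  have h₂ : (1 - x) / ε ≤ x / ε := by gcongr
  rw [aWt, min_eq_left h₁, min_eq_right h₂]

lemma aWt_mul_sq_eq_left (hε : 0 < ε) (hx₀ : 0 < x) (hxε : x ≤ ε) (hx : x ≤ 1 - x) (v : ℝ) :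
    aWt ε x * v ^ 2 = (aWt ε x * v) ^ 2 * (ε / x) := by
  rw [aWt_eq_left hε hxε hx]
  field_simp

lemma aWt_mul_sq_eq_right (hε : 0 < ε) (hx₁ : x < 1) (hxε : 1 - x ≤ ε) (hx : 1 - x ≤ x)
    (v : ℝ) : aWt ε x * v ^ 2 = (aWt ε x * v) ^ 2 * (ε / (1 - x)) := by
  have : 1 - x ≠ 0 := by linarith
  rw [aWt_eq_right hε hxε hx]
  field_simp

end Weight

lemma integrableOn_of_lintegral_sq_lt_top {α : Type*} [MeasurableSpace α] {μ : Measure α}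
    {f : α → ℝ} {s : Set α} (hs : μ s ≠ ∞) (hf : AEStronglyMeasurable f (μ.restrict s))
    (hf₂ : ∫⁻ x in s, ENNReal.ofReal (f x ^ 2) ∂μ < ∞) : IntegrableOn f s μ := by
  have : IsFiniteMeasure (μ.restrict s) := isFiniteMeasure_restrict.2 hs
  have hsq : Integrable (fun x => f x ^ 2) (μ.restrict s) :=
    (lintegral_ofReal_ne_top_iff_integrable (hf.pow 2)
      (ae_of_all _ fun x => sq_nonneg (f x))).1 hf₂.ne
  exact ((memLp_two_iff_integrable_sq hf).2 hsq).integrable one_le_two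

/-- Off the null set `S`, `g'` agrees with the measurable function `deriv g`. -/
lemma aestronglyMeasurable_of_hasDerivAt_off_countable {μ : Measure ℝ} [NullSingletonClass μ]
    {g g' : ℝ → ℝ} {s S : Set ℝ} (hS : S.Countable) (hs : MeasurableSet s)
    (hg : ∀ x ∈ s \ S, HasDerivAt g (g' x) x) : AEStronglyMeasurable g' (μ.restrict s) := by
  have hae : deriv g =ᵐ[μ.restrict s] g' := by
    have hS' : ∀ᵐ x ∂μ.restrict s, x ∉ S :=
      ae_restrict_of_ae (measure_eq_zero_iff_ae_notMem.1 (hS.measure_zero μ))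
    filter_upwards [ae_restrict_mem hs, hS'] with x hxs hxS
    exact (hg x ⟨hxs, hxS⟩).deriv
  exact (measurable_deriv g).aestronglyMeasurable.congr hae

lemma tendsto_nhdsGT_nhdsLT_of_eq_add_integral {g f : ℝ → ℝ} {a b c C : ℝ} (hab : a < b)
    (hc : c ∈ Icc a b) (hf : IntegrableOn f (Ioo a b))
    (hg : ∀ x ∈ Ioo a b, g x = C + ∫ t in c..x, f t) :
    Tendsto g (𝓝[>] a) (𝓝 (C + ∫ t in c..a, f t)) ∧
      Tendsto g (𝓝[<] b) (𝓝 (C + ∫ t in c..b, f t)) := by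
  have hF : ContinuousOn (fun x => C + ∫ t in c..x, f t) (Icc a b) := by
    rw [← uIcc_of_le hab.le] at hc ⊢
    refine continuousOn_const.add (intervalIntegral.continuousOn_primitive_interval' ?_ hc)
    rwa [intervalIntegrable_iff_integrableOn_Ioo_of_le hab.le]
  constructor
  · rw [← nhdsWithin_Ioo_eq_nhdsGT hab]
    exact ((hF a (left_mem_Icc.2 hab.le)).mono Ioo_subset_Icc_self).tendsto.congr'
      (eventually_nhdsWithin_of_forall fun x hx => (hg x hx).symm)
  · rw [← nhdsWithin_Ioo_eq_nhdsLT hab]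
    exact ((hF b (right_mem_Icc.2 hab.le)).mono Ioo_subset_Icc_self).tendsto.congr'
      (eventually_nhdsWithin_of_forall fun x hx => (hg x hx).symm)

lemma eq_zero_of_tendsto_of_lintegral_sq_mul_lt_top {α : Type*} [MeasurableSpace α]
    {μ : Measure α} {l : Filter α} {f w : α → ℝ} {s : Set α} {L : ℝ}
    (hf : Tendsto f l (𝓝 L))
    (hw : ∀ t ∈ l, ∃ t' ⊆ s ∩ t, MeasurableSet t' ∧ ∫⁻ x in t', ENNReal.ofReal (w x) ∂μ = ∞)
    (hfin : ∫⁻ x in s, ENNReal.ofReal (f x ^ 2 * w x) ∂μ < ∞) : L = 0 := by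
  by_contra hL
  have hL₂ : 0 < L ^ 2 / 2 := by positivity
  have hlarge : ∀ᶠ x in l, L ^ 2 / 2 < f x ^ 2 :=
    (hf.pow 2).eventually (lt_mem_nhds (by linarith))
  obtain ⟨t, hts, ht, htop⟩ := hw _ hlarge
  refine hfin.ne (top_unique ?_)
  calc ∞ = ENNReal.ofReal (L ^ 2 / 2) * ∫⁻ x in t, ENNReal.ofReal (w x) ∂μ := by
        rw [htop, ENNReal.mul_top (by simpa using hL₂)]
    _ = ∫⁻ x in t, ENNReal.ofReal (L ^ 2 / 2) * ENNReal.ofReal (w x) ∂μ :=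
        (lintegral_const_mul' _ _ ENNReal.ofReal_ne_top).symm
    _ ≤ ∫⁻ x in t, ENNReal.ofReal (f x ^ 2 * w x) ∂μ := by
        refine setLIntegral_mono' ht fun x hx => ?_
        rw [ENNReal.ofReal_mul (sq_nonneg _)]
        gcongr
        exact (hts hx).2.le
    _ ≤ ∫⁻ x in s, ENNReal.ofReal (f x ^ 2 * w x) ∂μ :=
        lintegral_mono_set fun x hx => (hts hx).1

lemma lintegral_mul_inv_sub_eq_top {a b p c : ℝ} (hab : a < b) (hp : p ∈ Icc a b) (hc : c ≠ 0)
    (hw : ∀ x ∈ Ioo a b, 0 ≤ c * (x - p)⁻¹) :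
    ∫⁻ x in Ioo a b, ENNReal.ofReal (c * (x - p)⁻¹) = ∞ := by
  by_contra h
  have hint : IntegrableOn (fun x => c * (x - p)⁻¹) (Ioo a b) :=
    (lintegral_ofReal_ne_top_iff_integrable (by fun_prop)
      (ae_restrict_of_forall_mem measurableSet_Ioo hw)).1 h
  have hinv : IntervalIntegrable (fun x => (x - p)⁻¹) volume a b := by
    rw [intervalIntegrable_iff_integrableOn_Ioo_of_le hab.le]
    refine IntegrableOn.congr_fun (hint.const_mul c⁻¹) (fun x _ => ?_) measurableSet_Ioo
    simp [← mul_assoc, inv_mul_cancel₀ hc]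
  rw [intervalIntegrable_sub_inv_iff, uIcc_of_le hab.le] at hinv
  exact hinv.elim hab.ne (not_not.2 hp)

lemma lintegral_div_sub_left_eq_top {a b c : ℝ} (hab : a < b) (hc : 0 < c) :
    ∫⁻ x in Ioo a b, ENNReal.ofReal (c / (x - a)) = ∞ := by
  simp_rw [div_eq_mul_inv]
  exact lintegral_mul_inv_sub_eq_top hab (left_mem_Icc.2 hab.le) hc.ne'
    fun x hx => mul_nonneg hc.le (inv_nonneg.2 (sub_nonneg.2 hx.1.le))

lemma lintegral_div_sub_right_eq_top {a b c : ℝ} (hab : a < b) (hc : 0 < c) :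
    ∫⁻ x in Ioo a b, ENNReal.ofReal (c / (b - x)) = ∞ := by
  have heq (x : ℝ) : c / (b - x) = -c * (x - b)⁻¹ := by
    rw [← neg_sub, div_neg, neg_mul, div_eq_mul_inv]
  simp_rw [heq]
  refine lintegral_mul_inv_sub_eq_top hab (right_mem_Icc.2 hab.le) (neg_ne_zero.2 hc.ne')
    fun x hx => ?_
  rw [neg_mul, ← mul_neg, ← inv_neg, neg_sub]
  exact mul_nonneg hc.le (inv_nonneg.2 (sub_nonneg.2 hx.2.le))

lemma eq_zero_of_tendsto_nhdsGT_of_lintegral_lt_top {f : ℝ → ℝ} {a b c L : ℝ} (hab : a < b)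
    (hc : 0 < c) (hf : Tendsto f (𝓝[>] a) (𝓝 L))
    (hfin : ∫⁻ x in Ioo a b, ENNReal.ofReal (f x ^ 2 * (c / (x - a))) < ∞) : L = 0 := by
  refine eq_zero_of_tendsto_of_lintegral_sq_mul_lt_top hf (fun t ht => ?_) hfin
  obtain ⟨u, hu, hut⟩ := mem_nhdsGT_iff_exists_Ioo_subset.1 ht
  refine ⟨Ioo a (min b u), fun x hx => ⟨?_, hut ?_⟩, measurableSet_Ioo,
    lintegral_div_sub_left_eq_top (lt_min hab hu) hc⟩
  exacts [⟨hx.1, hx.2.trans_le (min_le_left _ _)⟩, ⟨hx.1, hx.2.trans_le (min_le_right _ _)⟩]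

lemma eq_zero_of_tendsto_nhdsLT_of_lintegral_lt_top {f : ℝ → ℝ} {a b c L : ℝ} (hab : a < b)
    (hc : 0 < c) (hf : Tendsto f (𝓝[<] b) (𝓝 L))
    (hfin : ∫⁻ x in Ioo a b, ENNReal.ofReal (f x ^ 2 * (c / (b - x))) < ∞) : L = 0 := by
  refine eq_zero_of_tendsto_of_lintegral_sq_mul_lt_top hf (fun t ht => ?_) hfin
  obtain ⟨l, hl, hlt⟩ := mem_nhdsLT_iff_exists_Ioo_subset.1 ht
  refine ⟨Ioo (max a l) b, fun x hx => ⟨?_, hlt ?_⟩, measurableSet_Ioo,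
    lintegral_div_sub_right_eq_top (max_lt hab hl) hc⟩
  exacts [⟨(le_max_left _ _).trans_lt hx.1, hx.2⟩, ⟨(le_max_right _ _).trans_lt hx.1, hx.2⟩]

theorem flux_vanishes_1d_general
    (ε : ℝ) (hε : ε ∈ Set.Ioo (0:ℝ) (1/2))
    (u' g' : ℝ → ℝ)
    (hE : ∫⁻ x in Set.Ioo (0:ℝ) 1, ENNReal.ofReal (aWt ε x * (u' x) ^ 2) < ⊤)
    (hg : ∀ x ∈ Set.Ioo (0:ℝ) 1 \ {ε, 1 - ε},
      HasDerivAt (fun y => aWt ε y * u' y) (g' x) x)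
    (hg' : ∫⁻ x in Set.Ioo (0:ℝ) 1, ENNReal.ofReal ((g' x) ^ 2) < ⊤)
    (hFTC : ∀ x ∈ Set.Ioo (0:ℝ) 1,
      aWt ε x * u' x = aWt ε (1/2) * u' (1/2) + ∫ t in (1/2 : ℝ)..x, g' t) :
    Filter.Tendsto (fun x => aWt ε x * u' x) (nhdsWithin 0 (Set.Ioi 0)) (nhds 0) ∧
      Filter.Tendsto (fun x => aWt ε x * u' x) (nhdsWithin 1 (Set.Iio 1)) (nhds 0) := by
  obtain ⟨hε₀, hε₁⟩ := hε
  have hint : IntegrableOn g' (Ioo 0 1) :=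
    integrableOn_of_lintegral_sq_lt_top (by simp)
      (aestronglyMeasurable_of_hasDerivAt_off_countable
        ((countable_singleton _).insert ε) measurableSet_Ioo hg) hg'
  obtain ⟨h₀, h₁⟩ :=
    tendsto_nhdsGT_nhdsLT_of_eq_add_integral zero_lt_one (by norm_num) hint hFTC
  have hE₀ : ∫⁻ x in Ioo 0 ε, ENNReal.ofReal ((aWt ε x * u' x) ^ 2 * (ε / (x - 0))) < ∞ := by
    calc _ = ∫⁻ x in Ioo 0 ε, ENNReal.ofReal (aWt ε x * u' x ^ 2) :=
          setLIntegral_congr_fun measurableSet_Ioo fun x hx => by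
            rw [sub_zero, aWt_mul_sq_eq_left hε₀ hx.1 hx.2.le (by linarith [hx.2])]
      _ ≤ _ := lintegral_mono_set (Ioo_subset_Ioo_right (by linarith))
      _ < ∞ := hE
  have hE₁ :
      ∫⁻ x in Ioo (1 - ε) 1, ENNReal.ofReal ((aWt ε x * u' x) ^ 2 * (ε / (1 - x))) < ∞ := by
    calc _ = ∫⁻ x in Ioo (1 - ε) 1, ENNReal.ofReal (aWt ε x * u' x ^ 2) :=
          setLIntegral_congr_fun measurableSet_Ioo fun x hx => by
            rw [aWt_mul_sq_eq_right hε₀ hx.2 (by linarith [hx.1]) (by linarith [hx.1])]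
      _ ≤ _ := lintegral_mono_set (Ioo_subset_Ioo_left (by linarith))
      _ < ∞ := hE
  rw [eq_zero_of_tendsto_nhdsGT_of_lintegral_lt_top (by linarith) hε₀ h₀ hE₀] at h₀
  rw [eq_zero_of_tendsto_nhdsLT_of_lintegral_lt_top (by linarith) hε₀ h₁ hE₁] at h₁
  exact ⟨h₀, h₁⟩

/-- One-dimensional vanishing of the natural boundary flux: if `u` is differentiable on
`(0,1)` with finite weighted energy `∫₀¹ a u′² < ∞`, and `g = a u′` is differentiable on
`(0,1) ∖ {ε, 1−ε}` with `∫₀¹ (g′)² < ∞` and `g(x) = g(1/2) + ∫_{1/2}^x g′`, then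
`a u′ → 0` at both endpoints, even though no boundary condition is imposed. -/
theorem flux_vanishes_1d
    (ε : ℝ) (hε : ε ∈ Set.Ioo (0:ℝ) (1/2))
    (u u' g' : ℝ → ℝ)
    (hu : ∀ x ∈ Set.Ioo (0:ℝ) 1, HasDerivAt u (u' x) x)
    (hE : ∫⁻ x in Set.Ioo (0:ℝ) 1, ENNReal.ofReal (aWt ε x * (u' x) ^ 2) < ⊤)
    (hg : ∀ x ∈ Set.Ioo (0:ℝ) 1 \ {ε, 1 - ε},
      HasDerivAt (fun y => aWt ε y * u' y) (g' x) x)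
    (hg' : ∫⁻ x in Set.Ioo (0:ℝ) 1, ENNReal.ofReal ((g' x) ^ 2) < ⊤)
    (hFTC : ∀ x ∈ Set.Ioo (0:ℝ) 1,
      aWt ε x * u' x = aWt ε (1/2) * u' (1/2) + ∫ t in (1/2 : ℝ)..x, g' t) :
    Filter.Tendsto (fun x => aWt ε x * u' x) (nhdsWithin 0 (Set.Ioi 0)) (nhds 0) ∧
      Filter.Tendsto (fun x => aWt ε x * u' x) (nhdsWithin 1 (Set.Iio 1)) (nhds 0) :=
  flux_vanishes_1d_general ε hε u' g' hE hg hg' hFTC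
end
end

section
/- Let p > 0, α > 0 and β > 0 satisfy α < 1/p + 1 and β + 1 > α. For ε > 0 define a_ε : (0,∞) → (0,∞) by a_ε(d) = min(1, d^α/ε^β). Then (1/ε) ∫₀^ε ( ∫ₛ^ε a_ε(σ)⁻¹ dσ )^p ds → 0 as ε → 0⁺. -/
open MeasureTheory
noncomputable section

/-!
Since `a_ε(σ)⁻¹ ≤ 1 + ε^β σ^(-α)`, and for `σ ≥ s` one may trade `σ^(-α)` for
`s^(-θ) σ^(θ-α)` with `θ ≥ 0`, `θ - α > -1` and `θ p < 1` (such `θ` exists because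
`α < 1/p + 1`), the inner integral is at most `(ε + ε^(β+1-α)/(θ-α+1)) (ε/s)^θ`.
The average of `(ε/s)^(θp)` over `(0, ε]` is `1/(1-θp)`, so the whole expression is at most
`(ε + ε^(β+1-α)/(θ-α+1))^p / (1-θp)`, which tends to `0` because `β + 1 > α`.
-/

open Set Filter Topology

theorem setIntegral_Ioc_rpow_le {r s ε : ℝ} (hr : -1 < r) (hs : 0 ≤ s) (hsε : s ≤ ε) :
    ∫ x in Ioc s ε, x ^ r ≤ ε ^ (r + 1) / (r + 1) := by
  rw [← intervalIntegral.integral_of_le hsε, integral_rpow (Or.inl hr)]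
  have : 0 < r + 1 := by linarith
  gcongr
  exact sub_le_self _ (Real.rpow_nonneg hs _)

theorem inv_min_one_le_one_add_inv {y : ℝ} (hy : 0 < y) : (min 1 y)⁻¹ ≤ 1 + y⁻¹ := by
  rcases le_total 1 y with h | h
  · rw [min_eq_left h, inv_one]; linarith [inv_nonneg.2 hy.le]
  · rw [min_eq_right h]; linarith

theorem inv_rpow_le_rpow_sub_div {s σ α θ : ℝ} (hs : 0 < s) (hsσ : s ≤ σ) (hθ : 0 ≤ θ) :
    (σ ^ α)⁻¹ ≤ σ ^ (θ - α) / s ^ θ := by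
  have hσ : 0 < σ := hs.trans_le hsσ
  have hratio : 1 ≤ σ ^ θ / s ^ θ :=
    (one_le_div (Real.rpow_pos_of_pos hs θ)).2 (Real.rpow_le_rpow hs.le hsσ hθ)
  rw [Real.rpow_sub hσ, div_right_comm, inv_eq_one_div]
  gcongr

theorem one_div_mul_setIntegral_Ioc_rpow_le {f : ℝ → ℝ} {ε p θ M : ℝ} (hε : 0 < ε) (hp : 0 ≤ p)
    (hθp : θ * p < 1) (hM : 0 ≤ M) (hf : ∀ s ∈ Ioc 0 ε, 0 ≤ f s ∧ f s ≤ M * (ε / s) ^ θ) :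
    (1 / ε) * ∫ s in Ioc 0 ε, f s ^ p ≤ M ^ p / (1 - θ * p) := by
  have hr : -1 < -(θ * p) := by linarith
  have hmajorant : ∀ s ∈ Ioc 0 ε, f s ^ p ≤ M ^ p * ε ^ (θ * p) * s ^ (-(θ * p)) := by
    intro s hs
    obtain ⟨hfs₀, hfs⟩ := hf s hs
    have hs₀ : 0 < s := hs.1
    calc f s ^ p ≤ (M * (ε / s) ^ θ) ^ p := Real.rpow_le_rpow hfs₀ hfs hp
      _ = M ^ p * ε ^ (θ * p) * s ^ (-(θ * p)) := by
        rw [Real.mul_rpow hM (by positivity), ← Real.rpow_mul (by positivity),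
          Real.div_rpow hε.le hs₀.le, Real.rpow_neg hs₀.le]
        ring
  have hpow : ε ^ (θ * p) * ε ^ (-(θ * p) + 1) = ε := by
    rw [← Real.rpow_add hε]; simp
  calc (1 / ε) * ∫ s in Ioc 0 ε, f s ^ p
      ≤ (1 / ε) * ∫ s in Ioc 0 ε, M ^ p * ε ^ (θ * p) * s ^ (-(θ * p)) := by
        refine mul_le_mul_of_nonneg_left (integral_mono_of_nonneg ?_
          ((intervalIntegral.intervalIntegrable_rpow' hr).1.const_mul _) ?_) (by positivity)
        · exact (ae_restrict_mem measurableSet_Ioc).mono fun s hs =>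
            Real.rpow_nonneg (hf s hs).1 p
        · exact (ae_restrict_mem measurableSet_Ioc).mono hmajorant
    _ ≤ (1 / ε) * (M ^ p * ε ^ (θ * p) * (ε ^ (-(θ * p) + 1) / (-(θ * p) + 1))) := by
        rw [integral_const_mul]
        gcongr
        exact setIntegral_Ioc_rpow_le hr le_rfl hε.le
    _ = M ^ p / (1 - θ * p) := by
        rw [show -(θ * p) + 1 = 1 - θ * p by ring] at hpow ⊢
        field_simp
        rw [mul_assoc, hpow]
        ring

def powerWeight (α β ε σ : ℝ) : ℝ := min 1 (σ ^ α / ε ^ β)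

section powerWeight

variable {α β ε : ℝ}

theorem powerWeight_nonneg {σ : ℝ} (hε : 0 ≤ ε) (hσ : 0 ≤ σ) : 0 ≤ powerWeight α β ε σ :=
  le_min zero_le_one (div_nonneg (Real.rpow_nonneg hσ α) (Real.rpow_nonneg hε β))

theorem setIntegral_inv_powerWeight_nonneg {s : ℝ} (hε : 0 ≤ ε) (hs : 0 ≤ s) :
    0 ≤ ∫ σ in Ioc s ε, (powerWeight α β ε σ)⁻¹ :=
  setIntegral_nonneg measurableSet_Ioc fun _ hσ =>
    inv_nonneg.2 (powerWeight_nonneg hε (hs.trans hσ.1.le))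

theorem inv_powerWeight_le {s σ θ : ℝ} (hs : 0 < s) (hsσ : s ≤ σ) (hε : 0 < ε) (hθ : 0 ≤ θ) :
    (powerWeight α β ε σ)⁻¹ ≤ 1 + ε ^ β / s ^ θ * σ ^ (θ - α) := by
  have hσ : 0 < σ := hs.trans_le hsσ
  calc (powerWeight α β ε σ)⁻¹ ≤ 1 + (σ ^ α / ε ^ β)⁻¹ :=
        inv_min_one_le_one_add_inv (by positivity)
    _ = 1 + ε ^ β * (σ ^ α)⁻¹ := by rw [inv_div, div_eq_mul_inv]
    _ ≤ 1 + ε ^ β * (σ ^ (θ - α) / s ^ θ) := by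
        gcongr; exact inv_rpow_le_rpow_sub_div hs hsσ hθ
    _ = 1 + ε ^ β / s ^ θ * σ ^ (θ - α) := by ring

theorem setIntegral_inv_powerWeight_le {s θ : ℝ} (hs : 0 < s) (hsε : s ≤ ε) (hθ : 0 ≤ θ)
    (hθα : α - 1 < θ) :
    ∫ σ in Ioc s ε, (powerWeight α β ε σ)⁻¹ ≤
      (ε + ε ^ (β + 1 - α) / (θ - α + 1)) * (ε / s) ^ θ := by
  have hε : 0 < ε := hs.trans_le hsε
  have hr : -1 < θ - α := by linarith
  have hc : 0 < θ - α + 1 := by linarith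
  have hone_int : IntegrableOn (fun _ => (1 : ℝ)) (Ioc s ε) :=
    integrableOn_const measure_Ioc_lt_top.ne
  have hrpow_int : IntegrableOn (fun σ => ε ^ β / s ^ θ * σ ^ (θ - α)) (Ioc s ε) :=
    (intervalIntegral.intervalIntegrable_rpow' hr).1.const_mul _
  have hpow : ε ^ β * ε ^ (θ - α + 1) = ε ^ (β + 1 - α) * ε ^ θ := by
    rw [← Real.rpow_add hε, ← Real.rpow_add hε]; ring_nf
  calc ∫ σ in Ioc s ε, (powerWeight α β ε σ)⁻¹
      ≤ ∫ σ in Ioc s ε, (1 + ε ^ β / s ^ θ * σ ^ (θ - α)) := by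
        refine integral_mono_of_nonneg ?_ (hone_int.add hrpow_int) ?_
        · exact (ae_restrict_mem measurableSet_Ioc).mono fun σ hσ =>
            inv_nonneg.2 (powerWeight_nonneg hε.le (hs.le.trans hσ.1.le))
        · exact (ae_restrict_mem measurableSet_Ioc).mono fun σ hσ =>
            inv_powerWeight_le hs hσ.1.le hε hθ
    _ = (ε - s) + ε ^ β / s ^ θ * ∫ σ in Ioc s ε, σ ^ (θ - α) := by
        rw [integral_add hone_int hrpow_int, integral_const_mul,
          setIntegral_const, Real.volume_real_Ioc_of_le hsε, smul_eq_mul, mul_one]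
    _ ≤ ε + ε ^ β / s ^ θ * (ε ^ (θ - α + 1) / (θ - α + 1)) := by
        gcongr
        · linarith
        · simpa using setIntegral_Ioc_rpow_le hr hs.le hsε
    _ ≤ (ε + ε ^ (β + 1 - α) / (θ - α + 1)) * (ε / s) ^ θ := by
        have hratio : 1 ≤ (ε / s) ^ θ := Real.one_le_rpow ((one_le_div hs).2 hsε) hθ
        rw [Real.div_rpow hε.le hs.le] at hratio ⊢
        rw [add_mul]
        refine add_le_add (le_mul_of_one_le_right hε.le hratio) (le_of_eq ?_)
        rw [div_mul_div_comm, hpow]; field_simp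

end powerWeight

theorem power_weight_nondegeneracy_general
    (p α β : ℝ) (hp : 0 < p)
    (hαp : α < 1/p + 1) (hβα : β + 1 > α) :
    Filter.Tendsto
      (fun ε : ℝ => (1/ε) * ∫ s in Set.Ioc (0:ℝ) ε,
        (∫ σ in Set.Ioc s ε, (min 1 (σ ^ α / ε ^ β))⁻¹) ^ p)
      (nhdsWithin 0 (Set.Ioi 0)) (nhds 0) := by
  obtain ⟨θ, hθ, hθα, hθp⟩ : ∃ θ : ℝ, 0 ≤ θ ∧ α - 1 < θ ∧ θ * p < 1 := by
    refine ⟨max 0 ((α - 1 + 1 / p) / 2), le_max_left _ _, lt_max_of_lt_right (by linarith), ?_⟩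
    rw [← lt_div_iff₀ hp]
    exact max_lt (by positivity) (by linarith)
  have hbound : ∀ ε ∈ Ioi (0 : ℝ), (1 / ε) * ∫ s in Ioc 0 ε,
      (∫ σ in Ioc s ε, (powerWeight α β ε σ)⁻¹) ^ p
        ≤ (ε + ε ^ (β + 1 - α) / (θ - α + 1)) ^ p / (1 - θ * p) := fun ε hε =>
    one_div_mul_setIntegral_Ioc_rpow_le hε hp.le hθp
      (add_nonneg hε.le (div_nonneg (Real.rpow_nonneg hε.le _) (by linarith)))
      fun s hs => ⟨setIntegral_inv_powerWeight_nonneg hε.le hs.1.le,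
        setIntegral_inv_powerWeight_le hs.1 hs.2 hθ hθα⟩
  have hnonneg : ∀ ε ∈ Ioi (0 : ℝ), 0 ≤ (1 / ε) * ∫ s in Ioc 0 ε,
      (∫ σ in Ioc s ε, (powerWeight α β ε σ)⁻¹) ^ p := fun ε hε =>
    mul_nonneg (one_div_nonneg.2 hε.le) (setIntegral_nonneg measurableSet_Ioc fun s hs =>
      Real.rpow_nonneg (setIntegral_inv_powerWeight_nonneg hε.le hs.1.le) p)
  have hlim : Tendsto (fun ε : ℝ => (ε + ε ^ (β + 1 - α) / (θ - α + 1)) ^ p / (1 - θ * p))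
      (𝓝[>] 0) (𝓝 0) := by
    have hq : 0 < β + 1 - α := by linarith
    have hcont : ContinuousAt
        (fun ε : ℝ => (ε + ε ^ (β + 1 - α) / (θ - α + 1)) ^ p / (1 - θ * p)) 0 :=
      ((continuousAt_id.add ((continuousAt_id.rpow_const (Or.inr hq.le)).div_const _)).rpow_const
        (Or.inr hp.le)).div_const _
    simpa [Real.zero_rpow hq.ne', Real.zero_rpow hp.ne'] using
      hcont.tendsto.mono_left nhdsWithin_le_nhds
  exact tendsto_of_tendsto_of_tendsto_of_le_of_le' tendsto_const_nhds hlim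
    (eventually_mem_nhdsWithin.mono hnonneg) (eventually_mem_nhdsWithin.mono hbound)

/-- The power-type weights `a_ε(d) = min(1, d^α/ε^β)` with `α < 1/p + 1` and `β + 1 > α`
satisfy the non-degeneracy condition
`(1/ε) ∫₀^ε (∫ₛ^ε a_ε(σ)⁻¹ dσ)^p ds → 0` as `ε → 0⁺`. -/
theorem power_weight_nondegeneracy
    (p α β : ℝ) (hp : 0 < p) (hα : 0 < α) (hβ : 0 < β)
    (hαp : α < 1/p + 1) (hβα : β + 1 > α) :
    Filter.Tendsto
      (fun ε : ℝ => (1/ε) * ∫ s in Set.Ioc (0:ℝ) ε,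
        (∫ σ in Set.Ioc s ε, (min 1 (σ ^ α / ε ^ β))⁻¹) ^ p)
      (nhdsWithin 0 (Set.Ioi 0)) (nhds 0) :=
  power_weight_nondegeneracy_general p α β hp hαp hβα
end
end

section
/- Let N ≥ 2 and let Ω = 𝕋^{N−1} × (0,1) with 𝕋^{N−1} = ℝ^{N−1}/ℤ^{N−1} the flat torus with its Haar (Lebesgue) measure; write x = (x′, x_N) and d(x) = min(x_N, 1−x_N). Let φ : (0,1/2) → (0,∞) satisfy sup_{ε∈(0,1/2)} ε·φ(ε) < ∞, and for ε ∈ (0,1/2) set b_ε(x) = 1 if d(x) ≥ ε and b_ε(x) = φ(ε) if d(x) < ε. Given u₀ ∈ L²(Ω) and w⁰, w¹ ∈ L²(𝕋^{N−1}), define u₀^ε(x′, x_N) = u₀(x′, x_N) for ε ≤ x_N ≤ 1−ε, u₀^ε(x′, x_N) = w⁰(x′) for 0 < x_N < ε, and u₀^ε(x′, x_N) = w¹(x′) for 1−ε < x_N < 1. Then: (i) sup_{ε∈(0,1/2)} ∫_Ω b_ε(x) (u₀^ε(x))² dx < ∞; (ii) u₀^ε → u₀ in L²(Ω) as ε → 0⁺;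 (iii) for every ε ∈ (0,1/2), (1/ε)∫₀^ε u₀^ε(x′, s) ds = w⁰(x′) and (1/ε)∫_{1−ε}^{1} u₀^ε(x′, s) ds = w¹(x′) for almost every x′ ∈ 𝕋^{N−1}. -/
open MeasureTheory
open scoped ENNReal
noncomputable section

/-- The boundary-layer weight `b_ε`: equal to `1` on `Ω_ε = {d(x) ≥ ε}` and to
`φ(ε)` on the boundary layer `{d(x) < ε}`, where `d(x) = min(x_N, 1 − x_N)`. -/
def bWt (φε ε : ℝ) {n : ℕ} (p : (Fin n → ℝ) × ℝ) : ℝ :=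
  if ε ≤ min p.2 (1 - p.2) then 1 else φε

/-- The well prepared approximating initial data: `u₀` in the interior
`ε ≤ x_N ≤ 1−ε`, `w⁰(x′)` in the bottom layer `x_N < ε` and `w¹(x′)` in the top layer
`x_N > 1−ε`. -/
def prepared {n : ℕ} (u₀ : (Fin n → ℝ) × ℝ → ℝ) (w0 w1 : (Fin n → ℝ) → ℝ)
    (ε : ℝ) (p : (Fin n → ℝ) × ℝ) : ℝ :=
  if p.2 < ε then w0 p.1 else if p.2 ≤ 1 - ε then u₀ p else w1 p.1


/-!
The prepared datum differs from `u₀` only on the two layers `{x_N < ε}` and `{x_N > 1 - ε}`,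
each of height `ε`, where it does not depend on `x_N`. Hence its `b_ε`-weighted energy is at most
`‖u₀‖² + ε φ(ε) (‖w⁰‖² + ‖w¹‖²)` and its layer averages are exactly `w⁰` and `w¹`. Every point of
`Ω` leaves the layers as `ε → 0`, so dominated convergence, with dominating function
`4 (w⁰² + w¹² + u₀²)`, gives `u₀^ε → u₀` in `L²(Ω)`.
-/

open Filter Topology Set

theorem setLIntegral_prod_fst {α β : Type*} [MeasurableSpace α] [MeasurableSpace β]
    {μ : Measure α} {ν : Measure β} [SFinite μ] [SFinite ν] {f : α → ℝ≥0∞}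
    (s : Set α) (t : Set β) (hf : AEMeasurable f (μ.restrict s)) :
    ∫⁻ z in s ×ˢ t, f z.1 ∂μ.prod ν = ν t * ∫⁻ x in s, f x ∂μ := by
  rw [← Measure.prod_restrict]
  simpa [mul_comm] using
    lintegral_prod_mul (ν := ν.restrict t) hf (aemeasurable_const (b := (1 : ℝ≥0∞)))

theorem measurable_ofReal_sq {α : Type*} [MeasurableSpace α] {f : α → ℝ} (hf : Measurable f) :
    Measurable fun x => ENNReal.ofReal (f x ^ 2) :=
  (hf.pow_const 2).ennreal_ofReal

theorem measurableSet_unitBox (n : ℕ) : MeasurableSet (unitBox n) :=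
  MeasurableSet.univ_pi fun _ => measurableSet_Ico

theorem measurableSet_cyl (n : ℕ) : MeasurableSet (cyl n) :=
  (measurableSet_unitBox n).prod measurableSet_Ioo

section Cylinder

variable {n : ℕ}

theorem lintegral_cyl_fst {g : (Fin n → ℝ) → ℝ≥0∞} (hg : Measurable g) :
    ∫⁻ p in cyl n, g p.1 = ∫⁻ x in unitBox n, g x := by
  rw [cyl, Measure.volume_eq_prod, setLIntegral_prod_fst (ν := volume) _ _ hg.aemeasurable,
    Real.volume_Ioo, sub_zero, ENNReal.ofReal_one, one_mul]

theorem lintegral_cyl_indicator_layer_le {g : (Fin n → ℝ) → ℝ≥0∞} (hg : Measurable g)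
    {t : Set ℝ} (ht : MeasurableSet t) :
    ∫⁻ p in cyl n, {p : (Fin n → ℝ) × ℝ | p.2 ∈ t}.indicator (fun p => g p.1) p
      ≤ volume t * ∫⁻ x in unitBox n, g x := by
  have hmeas : MeasurableSet {p : (Fin n → ℝ) × ℝ | p.2 ∈ t} := measurable_snd ht
  rw [lintegral_indicator hmeas, Measure.restrict_restrict hmeas]
  calc _ ≤ ∫⁻ p in unitBox n ×ˢ t, g p.1 :=
        lintegral_mono_set fun p hp => ⟨hp.2.1, hp.1⟩
    _ = _ := by rw [Measure.volume_eq_prod, setLIntegral_prod_fst _ _ hg.aemeasurable]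

end Cylinder

section Prepared

variable {n : ℕ} {u₀ : (Fin n → ℝ) × ℝ → ℝ} {w0 w1 : (Fin n → ℝ) → ℝ} {ε : ℝ}
  {p : (Fin n → ℝ) × ℝ}

theorem measurable_prepared (hu₀ : Measurable u₀) (hw0 : Measurable w0) (hw1 : Measurable w1)
    (ε : ℝ) : Measurable (prepared u₀ w0 w1 ε) :=
  Measurable.ite (measurableSet_lt measurable_snd measurable_const) (hw0.comp measurable_fst)
    (Measurable.ite (measurableSet_le measurable_snd measurable_const) hu₀
      (hw1.comp measurable_fst))

theorem prepared_of_lt (h : p.2 < ε) : prepared u₀ w0 w1 ε p = w0 p.1 := if_pos h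

theorem prepared_of_mem_Icc (h : p.2 ∈ Icc ε (1 - ε)) : prepared u₀ w0 w1 ε p = u₀ p := by
  rw [prepared, if_neg h.1.not_gt, if_pos h.2]

theorem prepared_of_le_of_lt (h₁ : ε ≤ p.2) (h₂ : 1 - ε < p.2) :
    prepared u₀ w0 w1 ε p = w1 p.1 := by
  rw [prepared, if_neg h₁.not_gt, if_neg h₂.not_ge]

theorem ofReal_bWt_mul_prepared_sq_le (φε : ℝ) (hp : p ∈ cyl n) :
    ENNReal.ofReal (bWt φε ε p * prepared u₀ w0 w1 ε p ^ 2)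
      ≤ ENNReal.ofReal (u₀ p ^ 2) + ENNReal.ofReal φε *
        ({p : (Fin n → ℝ) × ℝ | p.2 ∈ Ioo 0 ε}.indicator (fun p => ENNReal.ofReal (w0 p.1 ^ 2)) p
          + {p : (Fin n → ℝ) × ℝ | p.2 ∈ Ioo (1 - ε) 1}.indicator
              (fun p => ENNReal.ofReal (w1 p.1 ^ 2)) p) := by
  obtain ⟨-, hp₀, hp₁⟩ := hp
  rcases lt_or_ge p.2 ε with hbot | hbot
  · have hb : bWt φε ε p = φε := if_neg ((min_le_left _ _).trans_lt hbot).not_ge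
    rw [hb, prepared_of_lt hbot,
      indicator_of_mem (s := {p : (Fin n → ℝ) × ℝ | p.2 ∈ Ioo 0 ε}) ⟨hp₀, hbot⟩,
      ENNReal.ofReal_mul' (sq_nonneg _)]
    exact le_add_left (by gcongr; exact le_self_add)
  rcases le_or_gt p.2 (1 - ε) with htop | htop
  · have hb : bWt φε ε p = 1 := if_pos (le_min hbot (by linarith))
    rw [hb, one_mul, prepared_of_mem_Icc ⟨hbot, htop⟩]
    exact le_self_add
  · have hb : bWt φε ε p = φε := if_neg ((min_le_right _ _).trans_lt (by linarith)).not_ge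
    rw [hb, prepared_of_le_of_lt hbot htop,
      indicator_of_mem (s := {p : (Fin n → ℝ) × ℝ | p.2 ∈ Ioo (1 - ε) 1}) ⟨htop, hp₁⟩,
      ENNReal.ofReal_mul' (sq_nonneg _)]
    exact le_add_left (by gcongr; exact le_add_self)

theorem lintegral_bWt_mul_prepared_sq_le (hu₀ : Measurable u₀) (hw0 : Measurable w0)
    (hw1 : Measurable w1) (φε : ℝ) (hε : 0 ≤ ε) :
    ∫⁻ p in cyl n, ENNReal.ofReal (bWt φε ε p * prepared u₀ w0 w1 ε p ^ 2)
      ≤ (∫⁻ p in cyl n, ENNReal.ofReal (u₀ p ^ 2)) + ENNReal.ofReal (ε * φε) *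
        ((∫⁻ x in unitBox n, ENNReal.ofReal (w0 x ^ 2))
          + ∫⁻ x in unitBox n, ENNReal.ofReal (w1 x ^ 2)) := by
  set bot := {p : (Fin n → ℝ) × ℝ | p.2 ∈ Ioo 0 ε}.indicator
    (fun p => ENNReal.ofReal (w0 p.1 ^ 2))
  set top := {p : (Fin n → ℝ) × ℝ | p.2 ∈ Ioo (1 - ε) 1}.indicator
    (fun p => ENNReal.ofReal (w1 p.1 ^ 2))
  have hbot : Measurable bot :=
    ((measurable_ofReal_sq hw0).comp measurable_fst).indicator (measurable_snd measurableSet_Ioo)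
  have htop : Measurable top :=
    ((measurable_ofReal_sq hw1).comp measurable_fst).indicator (measurable_snd measurableSet_Ioo)
  calc _ ≤ ∫⁻ p in cyl n, (ENNReal.ofReal (u₀ p ^ 2) + ENNReal.ofReal φε * (bot p + top p)) :=
        setLIntegral_mono ((measurable_ofReal_sq hu₀).add ((hbot.add htop).const_mul _))
          fun p hp => ofReal_bWt_mul_prepared_sq_le φε hp
    _ = (∫⁻ p in cyl n, ENNReal.ofReal (u₀ p ^ 2))
          + ENNReal.ofReal φε * ((∫⁻ p in cyl n, bot p) + ∫⁻ p in cyl n, top p) := by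
        rw [lintegral_add_left (measurable_ofReal_sq hu₀),
          lintegral_const_mul' _ _ ENNReal.ofReal_ne_top, lintegral_add_left hbot]
    _ ≤ (∫⁻ p in cyl n, ENNReal.ofReal (u₀ p ^ 2)) + ENNReal.ofReal φε *
          (volume (Ioo 0 ε) * (∫⁻ x in unitBox n, ENNReal.ofReal (w0 x ^ 2))
            + volume (Ioo (1 - ε) 1) * ∫⁻ x in unitBox n, ENNReal.ofReal (w1 x ^ 2)) := by
        gcongr
        · exact lintegral_cyl_indicator_layer_le (measurable_ofReal_sq hw0) measurableSet_Ioo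
        · exact lintegral_cyl_indicator_layer_le (measurable_ofReal_sq hw1) measurableSet_Ioo
    _ = _ := by
        rw [Real.volume_Ioo, Real.volume_Ioo, sub_sub_cancel, sub_zero, ENNReal.ofReal_mul hε]
        ring

theorem ofReal_sq_prepared_sub_le :
    ENNReal.ofReal ((prepared u₀ w0 w1 ε p - u₀ p) ^ 2)
      ≤ 4 * (ENNReal.ofReal (w0 p.1 ^ 2) + ENNReal.ofReal (w1 p.1 ^ 2)
        + ENNReal.ofReal (u₀ p ^ 2)) := by
  calc _ ≤ ENNReal.ofReal (4 * (w0 p.1 ^ 2 + w1 p.1 ^ 2 + u₀ p ^ 2)) := by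
        refine ENNReal.ofReal_le_ofReal ?_
        unfold prepared
        split_ifs <;> nlinarith [sq_nonneg (w0 p.1 + u₀ p), sq_nonneg (w1 p.1 + u₀ p),
          sq_nonneg (w0 p.1), sq_nonneg (w1 p.1), sq_nonneg (u₀ p)]
    _ = _ := by
        rw [ENNReal.ofReal_mul (by norm_num), ENNReal.ofReal_add (by positivity) (by positivity),
          ENNReal.ofReal_add (by positivity) (by positivity), ENNReal.ofReal_ofNat]

theorem eventually_prepared_eq (hp : p ∈ cyl n) :
    ∀ᶠ ε in 𝓝 0, prepared u₀ w0 w1 ε p = u₀ p := by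
  obtain ⟨-, hp₀, hp₁⟩ := hp
  filter_upwards [Iio_mem_nhds (lt_min hp₀ (sub_pos.2 hp₁))] with ε (hε : ε < _)
  exact prepared_of_mem_Icc
    ⟨hε.le.trans (min_le_left _ _), by linarith [hε.le.trans (min_le_right _ _)]⟩

theorem tendsto_lintegral_prepared_sub_sq (hu₀ : Measurable u₀) (hw0 : Measurable w0)
    (hw1 : Measurable w1) (hu₀_L2 : ∫⁻ p in cyl n, ENNReal.ofReal (u₀ p ^ 2) < ⊤)
    (hw0_L2 : ∫⁻ x in unitBox n, ENNReal.ofReal (w0 x ^ 2) < ⊤)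
    (hw1_L2 : ∫⁻ x in unitBox n, ENNReal.ofReal (w1 x ^ 2) < ⊤) :
    Tendsto (fun ε => ∫⁻ p in cyl n, ENNReal.ofReal ((prepared u₀ w0 w1 ε p - u₀ p) ^ 2))
      (𝓝 0) (𝓝 0) := by
  have hbound : ∫⁻ p in cyl n, 4 * (ENNReal.ofReal (w0 p.1 ^ 2) + ENNReal.ofReal (w1 p.1 ^ 2)
      + ENNReal.ofReal (u₀ p ^ 2)) ≠ ⊤ := by
    rw [lintegral_const_mul _ (by fun_prop), lintegral_add_left (by fun_prop),
      lintegral_add_left (by fun_prop), lintegral_cyl_fst (measurable_ofReal_sq hw0),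
      lintegral_cyl_fst (measurable_ofReal_sq hw1)]
    finiteness
  have hlim : ∀ᵐ p ∂volume.restrict (cyl n),
      Tendsto (fun ε => ENNReal.ofReal ((prepared u₀ w0 w1 ε p - u₀ p) ^ 2)) (𝓝 0) (𝓝 0) :=
    (ae_restrict_iff' (measurableSet_cyl n)).2 <| ae_of_all _ fun p hp =>
      tendsto_const_nhds.congr' <|
        (eventually_prepared_eq (u₀ := u₀) (w0 := w0) (w1 := w1) hp).mono fun ε h => by simp [h]
  simpa using tendsto_lintegral_filter_of_dominated_convergence _
    (Eventually.of_forall fun ε =>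
      measurable_ofReal_sq ((measurable_prepared hu₀ hw0 hw1 ε).sub hu₀))
    (Eventually.of_forall fun ε => ae_of_all _ fun p => ofReal_sq_prepared_sub_le) hbound hlim

theorem average_prepared_bot (hε : 0 < ε) (x : Fin n → ℝ) :
    (1 / ε) * ∫ s in Ioc 0 ε, prepared u₀ w0 w1 ε (x, s) = w0 x := by
  rw [integral_Ioc_eq_integral_Ioo,
    setIntegral_congr_fun measurableSet_Ioo (g := fun _ => w0 x) fun s hs =>
      prepared_of_lt (u₀ := u₀) (w1 := w1) hs.2,
    setIntegral_const, Real.volume_real_Ioo_of_le hε.le, sub_zero, smul_eq_mul]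
  field_simp

theorem average_prepared_top (hε : 0 < ε) (hε₂ : ε ≤ 1 / 2) (x : Fin n → ℝ) :
    (1 / ε) * ∫ s in Ioc (1 - ε) 1, prepared u₀ w0 w1 ε (x, s) = w1 x := by
  rw [setIntegral_congr_fun measurableSet_Ioc (g := fun _ => w1 x) fun s hs =>
      prepared_of_le_of_lt (u₀ := u₀) (w0 := w0) (by linarith [hs.1]) hs.1,
    setIntegral_const, Real.volume_real_Ioc_of_le (by linarith), sub_sub_cancel, smul_eq_mul]
  field_simp

end Prepared

theorem well_prepared_data_exists_general
    (n : ℕ)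
    (φ : ℝ → ℝ)
    (hφ_bdd : ∃ C : ℝ, ∀ ε ∈ Set.Ioo (0:ℝ) (1/2), ε * φ ε ≤ C)
    (u₀ : (Fin n → ℝ) × ℝ → ℝ) (hu₀_meas : Measurable u₀)
    (hu₀_L2 : ∫⁻ p in cyl n, ENNReal.ofReal ((u₀ p) ^ 2) < ⊤)
    (w0 w1 : (Fin n → ℝ) → ℝ) (hw0_meas : Measurable w0) (hw1_meas : Measurable w1)
    (hw0_L2 : ∫⁻ x' in unitBox n, ENNReal.ofReal ((w0 x') ^ 2) < ⊤)
    (hw1_L2 : ∫⁻ x' in unitBox n, ENNReal.ofReal ((w1 x') ^ 2) < ⊤) :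
    (∃ C : ℝ, ∀ ε ∈ Set.Ioo (0:ℝ) (1/2),
        ∫⁻ p in cyl n,
            ENNReal.ofReal (bWt (φ ε) ε p * (prepared u₀ w0 w1 ε p) ^ 2)
          ≤ ENNReal.ofReal C) ∧
    Filter.Tendsto
      (fun ε => ∫⁻ p in cyl n, ENNReal.ofReal ((prepared u₀ w0 w1 ε p - u₀ p) ^ 2))
      (nhdsWithin 0 (Set.Ioo 0 (1/2))) (nhds 0) ∧
    ∀ ε ∈ Set.Ioo (0:ℝ) (1/2),
      (∀ᵐ x' ∂(volume.restrict (unitBox n)),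
        (1/ε) * ∫ s in Set.Ioc (0:ℝ) ε, prepared u₀ w0 w1 ε (x', s) = w0 x') ∧
      (∀ᵐ x' ∂(volume.restrict (unitBox n)),
        (1/ε) * ∫ s in Set.Ioc (1 - ε) 1, prepared u₀ w0 w1 ε (x', s) = w1 x') := by
  obtain ⟨C, hC⟩ := hφ_bdd
  refine ⟨?_, (tendsto_lintegral_prepared_sub_sq hu₀_meas hw0_meas hw1_meas hu₀_L2 hw0_L2
    hw1_L2).mono_left nhdsWithin_le_nhds, fun ε hε => ⟨ae_of_all _ (average_prepared_bot hε.1),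
    ae_of_all _ (average_prepared_top hε.1 hε.2.le)⟩⟩
  set M := (∫⁻ p in cyl n, ENNReal.ofReal (u₀ p ^ 2)) + ENNReal.ofReal C *
    ((∫⁻ x in unitBox n, ENNReal.ofReal (w0 x ^ 2)) + ∫⁻ x in unitBox n, ENNReal.ofReal (w1 x ^ 2))
    with hM
  refine ⟨M.toReal, fun ε hε => ?_⟩
  rw [ENNReal.ofReal_toReal (by finiteness)]
  calc _ ≤ _ := lintegral_bWt_mul_prepared_sq_le hu₀_meas hw0_meas hw1_meas (φ ε) hε.1.le
    _ ≤ M := by rw [hM]; gcongr; exact hC ε hε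

/-- Every pair `(u₀, w₀) ∈ L²(Ω) × L²(∂Ω)` (with `w₀ = (w⁰, w¹)` on the two boundary
components) admits a well prepared sequence of approximating initial data: the family
`u₀^ε` has uniformly bounded `b_ε`-weighted `L²` norms, converges to `u₀` in `L²(Ω)`, and
its boundary-layer averages are exactly `w⁰` and `w¹`. -/
theorem well_prepared_data_exists
    (n : ℕ) (hn : 1 ≤ n)
    (φ : ℝ → ℝ) (hφ_pos : ∀ ε ∈ Set.Ioo (0:ℝ) (1/2), 0 < φ ε)
    (hφ_bdd : ∃ C : ℝ, ∀ ε ∈ Set.Ioo (0:ℝ) (1/2), ε * φ ε ≤ C)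
    (u₀ : (Fin n → ℝ) × ℝ → ℝ) (hu₀_meas : Measurable u₀)
    (hu₀_L2 : ∫⁻ p in cyl n, ENNReal.ofReal ((u₀ p) ^ 2) < ⊤)
    (w0 w1 : (Fin n → ℝ) → ℝ) (hw0_meas : Measurable w0) (hw1_meas : Measurable w1)
    (hw0_L2 : ∫⁻ x' in unitBox n, ENNReal.ofReal ((w0 x') ^ 2) < ⊤)
    (hw1_L2 : ∫⁻ x' in unitBox n, ENNReal.ofReal ((w1 x') ^ 2) < ⊤) :
    (∃ C : ℝ, ∀ ε ∈ Set.Ioo (0:ℝ) (1/2),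
        ∫⁻ p in cyl n,
            ENNReal.ofReal (bWt (φ ε) ε p * (prepared u₀ w0 w1 ε p) ^ 2)
          ≤ ENNReal.ofReal C) ∧
    Filter.Tendsto
      (fun ε => ∫⁻ p in cyl n, ENNReal.ofReal ((prepared u₀ w0 w1 ε p - u₀ p) ^ 2))
      (nhdsWithin 0 (Set.Ioo 0 (1/2))) (nhds 0) ∧
    ∀ ε ∈ Set.Ioo (0:ℝ) (1/2),
      (∀ᵐ x' ∂(volume.restrict (unitBox n)),
        (1/ε) * ∫ s in Set.Ioc (0:ℝ) ε, prepared u₀ w0 w1 ε (x', s) = w0 x') ∧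
      (∀ᵐ x' ∂(volume.restrict (unitBox n)),
        (1/ε) * ∫ s in Set.Ioc (1 - ε) 1, prepared u₀ w0 w1 ε (x', s) = w1 x') :=
  well_prepared_data_exists_general n φ hφ_bdd u₀ hu₀_meas hu₀_L2 w0 w1 hw0_meas hw1_meas hw0_L2
    hw1_L2
end
end
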